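/- arXiv:1912.06428 — 6 statements merged into one kernel-verified Lean document; each statement's English description precedes it below -/
import Mathlib

section
/- For every cap C ≥ 1, every price floor p ≥ 0 and every price ceiling p̄ with p̄ > p and p̄ > 0, there exist a cap C' ∈ {1,2,3,…} ∪ {∞} and a price floor p' ≥ 0 (with p' > 0 in case C' = ∞) such that the truth-telling expected welfare of the no-ceiling auction satisfies W(M(C',p')) ≥ (1/2)·W(M(C,p,p̄)). -/
open MeasureTheory ProbabilityTheory

noncomputable section

/-- The marginal value of the `j`-th license under the curve `V`. -/
def marg (V : ℕ → ℝ) (j : ℕ) : ℝ := V j - V (j - 1)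

/-- A valuation curve: `V 0 = 0`, nondecreasing, nonincreasing marginal values,
and only finitely many nonzero marginal values. -/
def IsValuation (V : ℕ → ℝ) : Prop :=
  V 0 = 0 ∧ Monotone V ∧ (∀ j : ℕ, 1 ≤ j → marg V (j + 1) ≤ marg V j) ∧
    ∃ N : ℕ, ∀ j : ℕ, N ≤ j → marg V j = 0

/-- A social cost function: `Q 0 = 0`, nondecreasing, and (discretely) convex. -/
def IsCost (Q : ℕ → ℝ) : Prop :=
  Q 0 = 0 ∧ Monotone Q ∧ ∀ x : ℕ, 1 ≤ x → Q x - Q (x - 1) ≤ Q (x + 1) - Q x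

/-- The demand of a valuation curve at price `p`:
`sup { j ≥ 1 : marg V j ≥ p } ∈ ℕ ∪ {∞}` (with `sup ∅ = 0`). -/
def dem (V : ℕ → ℝ) (p : ℝ) : ℕ∞ :=
  sSup {j : ℕ∞ | ∃ k : ℕ, j = (k : ℕ∞) ∧ 1 ≤ k ∧ p ≤ marg V k}

/-- Number of licenses sold to curve `V` under cap `C` (possibly `∞`) and price floor `p`. -/
def sold (C : ℕ∞) (p : ℝ) (V : ℕ → ℝ) : ℕ := (min C (dem V p)).toNat

/-- The safe price for cap `C`: the average social cost `Q C / C` per license. -/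
def safeP (Q : ℕ → ℝ) (C : ℕ) : ℝ := Q C / C

/-- Truth-telling expected welfare of the no-ceiling cap-and-price auction `M(C,p)`
for a distribution `F` over (combined) valuation curves. -/
def Wfl (F : Measure (ℕ → ℝ)) (Q : ℕ → ℝ) (C : ℕ∞) (p : ℝ) : ℝ :=
  ∫ V, (V (sold C p V) - Q (sold C p V)) ∂F

/-- Number of licenses sold under cap `C`, price floor `p`, and price ceiling `pbar`. -/
def xceil (C : ℕ) (p pbar : ℝ) (V : ℕ → ℝ) : ℕ :=
  if (C : ℕ∞) ≤ dem V pbar then (dem V pbar).toNat else sold (C : ℕ∞) p V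

/-- Truth-telling expected welfare of the cap-and-price auction `M(C,p,pbar)`. -/
def Wceil (F : Measure (ℕ → ℝ)) (Q : ℕ → ℝ) (C : ℕ) (p pbar : ℝ) : ℝ :=
  ∫ V, (V (xceil C p pbar V) - Q (xceil C p pbar V)) ∂F

/-- The combined valuation curve of a profile of valuation curves. -/
def comb {n : ℕ} (Vp : Fin n → ℕ → ℝ) (x : ℕ) : ℝ :=
  sSup {s : ℝ | ∃ y : Fin n → ℕ, (∑ i, y i) = x ∧ s = ∑ i, Vp i (y i)}

open Classical in
/-- Product of a family of probability measures (0 if the family fails to consist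
of probability measures). -/
def piProb {ι : Type*} [Fintype ι] {α : ι → Type*} [∀ i, MeasurableSpace (α i)]
    (μ : ∀ i, Measure (α i)) : Measure (∀ i, α i) :=
  if h : ∀ i, IsProbabilityMeasure (μ i) then
    haveI := h
    Measure.pi μ
  else 0

/-- Truth-telling expected welfare of `M(C,p)` for independent firms with
valuation distributions `F i`, computed via the combined valuation curve. -/
def Wcomb {n : ℕ} (F : Fin n → Measure (ℕ → ℝ)) (Q : ℕ → ℝ) (C : ℕ∞) (p : ℝ) : ℝ :=
  ∫ Vp, (comb Vp (sold C p (comb Vp)) - Q (sold C p (comb Vp))) ∂(piProb F)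

/-- Truth-telling expected welfare of `M(C,p,pbar)` for independent firms. -/
def WceilComb {n : ℕ} (F : Fin n → Measure (ℕ → ℝ)) (Q : ℕ → ℝ) (C : ℕ) (p pbar : ℝ) : ℝ :=
  ∫ Vp, (comb Vp (xceil C p pbar (comb Vp)) - Q (xceil C p pbar (comb Vp))) ∂(piProb F)

/-- `W^{(1)}`: the expected optimal welfare from allocating licenses to a single firm. -/
def W1 {n : ℕ} (F : Fin n → Measure (ℕ → ℝ)) (Q : ℕ → ℝ) : ℝ :=
  ∫ Vp, sSup {w : ℝ | ∃ (i : Fin n) (x : ℕ), w = Vp i x - Q x} ∂(piProb F)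

/-- The per-license price in the uniform-price auction with cap `C` and floor `pf`,
given a bid profile `b`. -/
def priceOf {n : ℕ} (C : ℕ) (pf : ℝ) (b : Fin n → ℕ → ℝ) : ℝ :=
  if (∑ i, dem (b i) pf) < (C : ℕ∞) then pf else comb b C - comb b (C - 1)

/-- A (measurable) tie-breaking allocation rule for the uniform-price auction with
cap `C` and price floor `pf`. -/
def IsAllocRule {n : ℕ} (C : ℕ) (pf : ℝ) (alloc : (Fin n → ℕ → ℝ) → Fin n → ℕ) : Prop :=
  Measurable alloc ∧
    ∀ b : Fin n → ℕ → ℝ, (∀ i, IsValuation (b i)) →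
      (((∑ i, dem (b i) pf) < (C : ℕ∞)) → ∀ i, alloc b i = (dem (b i) pf).toNat) ∧
      (((C : ℕ∞) ≤ ∑ i, dem (b i) pf) →
        (∑ i, alloc b i) = C ∧
          ∀ y : Fin n → ℕ, (∑ i, y i) = C → (∑ i, b i (y i)) ≤ ∑ i, b i (alloc b i))

/-- The strategy `σi` never overbids: with probability one the bid is a valuation
curve pointwise below the true valuation. -/
def NoOverbid (σi : Kernel (ℕ → ℝ) (ℕ → ℝ)) : Prop :=
  ∀ V : ℕ → ℝ, IsValuation V → σi V {B | IsValuation B ∧ ∀ x, B x ≤ V x} = 1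

/-- Expected welfare when the firms play the (randomized) strategy profile `σ`. -/
def EqWelfare {n : ℕ} (F : Fin n → Measure (ℕ → ℝ)) (σ : Fin n → Kernel (ℕ → ℝ) (ℕ → ℝ))
    (alloc : (Fin n → ℕ → ℝ) → Fin n → ℕ) (Q : ℕ → ℝ) : ℝ :=
  ∫ Vp, (∫ b, ((∑ i, Vp i (alloc b i)) - Q (∑ i, alloc b i))
      ∂(piProb fun j => σ j (Vp j))) ∂(piProb F)

/-- Expected utility of firm `i` with valuation `Vi` when every firm plays `σ`. -/
def EUeq {n : ℕ} (F : Fin n → Measure (ℕ → ℝ)) (σ : Fin n → Kernel (ℕ → ℝ) (ℕ → ℝ))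
    (alloc : (Fin n → ℕ → ℝ) → Fin n → ℕ) (C : ℕ) (pf : ℝ) (i : Fin n) (Vi : ℕ → ℝ) : ℝ :=
  ∫ Vp, (∫ b, (Vi (alloc b i) - priceOf C pf b * (alloc b i : ℝ))
      ∂(piProb fun j => σ j (Function.update Vp i Vi j))) ∂(piProb F)

/-- Expected utility of firm `i` with valuation `Vi` deviating to the fixed bid `Bt`
while the others play `σ`. -/
def EUdev {n : ℕ} (F : Fin n → Measure (ℕ → ℝ)) (σ : Fin n → Kernel (ℕ → ℝ) (ℕ → ℝ))
    (alloc : (Fin n → ℕ → ℝ) → Fin n → ℕ) (C : ℕ) (pf : ℝ) (i : Fin n) (Vi Bt : ℕ → ℝ) : ℝ :=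
  ∫ Vp, (∫ b, (Vi (alloc b i) - priceOf C pf b * (alloc b i : ℝ))
      ∂(piProb fun j => if j = i then Measure.dirac Bt else σ j (Vp j))) ∂(piProb F)

/-- Bayes–Nash equilibrium of the uniform-price auction with cap `C` and floor `pf`. -/
def IsBNE {n : ℕ} (F : Fin n → Measure (ℕ → ℝ)) (σ : Fin n → Kernel (ℕ → ℝ) (ℕ → ℝ))
    (alloc : (Fin n → ℕ → ℝ) → Fin n → ℕ) (C : ℕ) (pf : ℝ) : Prop :=
  ∀ (i : Fin n) (Vi : ℕ → ℝ), IsValuation Vi → ∀ Bt : ℕ → ℝ, IsValuation Bt →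
    EUdev F σ alloc C pf i Vi Bt ≤ EUeq F σ alloc C pf i Vi

/-- `θ_V = min( d_V(p), d_V(P(C)) )`, as a natural number. -/
def thetaN (Q : ℕ → ℝ) (C : ℕ) (p : ℝ) (V : ℕ → ℝ) : ℕ :=
  (min (dem V p) (dem V (safeP Q C))).toNat

-- antitone marginals
lemma marg_anti {V : ℕ → ℝ} (hV : IsValuation V) {i j : ℕ} (hi : 1 ≤ i) (hij : i ≤ j) :
    marg V j ≤ marg V i := by
  induction j, hij using Nat.le_induction with
  | base => exact le_refl _
  | succ n hn ih => exact le_trans (hV.2.2.1 n (le_trans hi hn)) ih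

lemma margQ_mono {Q : ℕ → ℝ} (hQ : IsCost Q) {i j : ℕ} (hi : 1 ≤ i) (hij : i ≤ j) :
    marg Q i ≤ marg Q j := by
  induction j, hij using Nat.le_induction with
  | base => exact le_refl _
  | succ n hn ih =>
    refine le_trans ih ?_
    have := hQ.2.2 n (le_trans hi hn)
    simp only [marg, Nat.add_sub_cancel] at *
    linarith

lemma le_dem {V : ℕ → ℝ} {t : ℝ} {k : ℕ} (hk : 1 ≤ k) (h : t ≤ marg V k) :
    (k : ℕ∞) ≤ dem V t := le_sSup ⟨k, rfl, hk, h⟩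

lemma dem_le_iff {V : ℕ → ℝ} (hV : IsValuation V) {t : ℝ} {k : ℕ} (hk : 1 ≤ k) :
    (k : ℕ∞) ≤ dem V t ↔ t ≤ marg V k := by
  constructor
  · intro h
    by_contra hc
    push_neg at hc
    have h1 : dem V t ≤ ((k - 1 : ℕ) : ℕ∞) := by
      apply sSup_le
      rintro j ⟨m, rfl, hm1, hmt⟩
      have hmk : m ≤ k - 1 := by
        by_contra hmk
        push_neg at hmk
        have : k ≤ m := by omega
        have := marg_anti hV hk this
        linarith
      exact_mod_cast hmk
    have := le_trans h h1
    have : k ≤ k - 1 := by exact_mod_cast this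
    omega
  · exact le_dem hk

lemma dem_ne_top {V : ℕ → ℝ} (hV : IsValuation V) {t : ℝ} (ht : 0 < t) :
    dem V t ≠ ⊤ := by
  obtain ⟨N, hN⟩ := hV.2.2.2
  have h1 : dem V t ≤ (N : ℕ∞) := by
    apply sSup_le
    rintro j ⟨m, rfl, hm1, hmt⟩
    have : m ≤ N := by
      by_contra hc
      push_neg at hc
      rw [hN m (le_of_lt hc)] at hmt
      linarith
    exact_mod_cast this
  exact ne_top_of_le_ne_top (by simp) h1

lemma dem_anti {V : ℕ → ℝ} {s t : ℝ} (h : s ≤ t) : dem V t ≤ dem V s := by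
  apply sSup_le_sSup
  rintro j ⟨m, rfl, hm1, hmt⟩
  exact ⟨m, rfl, hm1, le_trans h hmt⟩

lemma sum_marg {V : ℕ → ℝ} (h0 : V 0 = 0) (n : ℕ) :
    V n = ∑ k ∈ Finset.range n, marg V (k + 1) := by
  induction n with
  | zero => simpa using h0
  | succ n ih =>
    rw [Finset.sum_range_succ, ← ih]
    simp [marg]

-- discrete convexity: average cost is monotone
lemma convQ {Q : ℕ → ℝ} (hQ : IsCost Q) {n C : ℕ} (hn : n ≤ C) :
    (C : ℝ) * Q n ≤ (n : ℝ) * Q C := by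
  rcases eq_or_lt_of_le hn with rfl | hlt
  · exact le_refl _
  · have hQn : Q n ≤ (n : ℝ) * marg Q (n + 1) := by
      rw [sum_marg hQ.1 n]
      calc ∑ k ∈ Finset.range n, marg Q (k + 1)
          ≤ ∑ _k ∈ Finset.range n, marg Q (n + 1) := by
            apply Finset.sum_le_sum
            intro k hk
            exact margQ_mono hQ (by omega) (by simp at hk; omega)
        _ = (n : ℝ) * marg Q (n + 1) := by simp [mul_comm]
    have hQCn : ((C : ℝ) - n) * marg Q (n + 1) ≤ Q C - Q n := by
      have : Q C - Q n = ∑ k ∈ Finset.Ico n C, marg Q (k + 1) := by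
        rw [sum_marg hQ.1 C, sum_marg hQ.1 n, Finset.sum_Ico_eq_sub _ hn]
      rw [this]
      calc ((C : ℝ) - n) * marg Q (n + 1)
          = ∑ _k ∈ Finset.Ico n C, marg Q (n + 1) := by
            rw [Finset.sum_const, Nat.card_Ico, nsmul_eq_mul]
            rw [Nat.cast_sub hn]
        _ ≤ ∑ k ∈ Finset.Ico n C, marg Q (k + 1) := by
            apply Finset.sum_le_sum
            intro k hk
            exact margQ_mono hQ (by omega) (by simp at hk; omega)
    have hn0 : (0:ℝ) ≤ (n:ℝ) := by positivity
    have hCn : (n:ℝ) ≤ (C:ℝ) := by exact_mod_cast hn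
    nlinarith [hQn, hQCn]

-- marginal cost beyond C is at least the safe price
lemma safeP_le_margQ {Q : ℕ → ℝ} (hQ : IsCost Q) {C k : ℕ} (hC : 1 ≤ C) (hk : C < k) :
    safeP Q C ≤ marg Q k := by
  have h1 : Q C ≤ (C : ℝ) * marg Q k := by
    rw [sum_marg hQ.1 C]
    calc ∑ j ∈ Finset.range C, marg Q (j + 1)
        ≤ ∑ _j ∈ Finset.range C, marg Q k := by
          apply Finset.sum_le_sum
          intro j hj
          exact margQ_mono hQ (by omega) (by simp at hj; omega)
      _ = (C : ℝ) * marg Q k := by simp [mul_comm]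
  have hC0 : (0:ℝ) < C := by exact_mod_cast hC
  rw [safeP, div_le_iff₀ hC0]
  linarith [h1]

-- L1: nonnegative welfare at prices above the safe price, below the cap
lemma h_nonneg {V Q : ℕ → ℝ} (hV : IsValuation V) (hQ : IsCost Q) {C n : ℕ}
    (hC : 1 ≤ C) (hn : n ≤ C)
    (hmarg : ∀ k, 1 ≤ k → k ≤ n → safeP Q C ≤ marg V k) :
    0 ≤ V n - Q n := by
  have hVn : (n : ℝ) * safeP Q C ≤ V n := by
    rw [sum_marg hV.1 n]
    calc (n:ℝ) * safeP Q C = ∑ _k ∈ Finset.range n, safeP Q C := by simp [mul_comm]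
      _ ≤ ∑ k ∈ Finset.range n, marg V (k + 1) := by
          apply Finset.sum_le_sum
          intro k hk
          exact hmarg (k+1) (by omega) (by simp at hk; omega)
  have hQn : Q n ≤ (n : ℝ) * safeP Q C := by
    have := convQ hQ hn
    have hC0 : (0:ℝ) < C := by exact_mod_cast hC
    rw [safeP]
    rw [mul_div_assoc'] at *
    rw [le_div_iff₀ hC0]
    linarith
  linarith

lemma key_pointwise {V Q : ℕ → ℝ} (hV : IsValuation V) (hQ : IsCost Q) {C : ℕ}
    (hC : 1 ≤ C) {p pbar : ℝ} (hp : 0 ≤ p) (hppbar : p < pbar) (hpbar : 0 < pbar) :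
    V (xceil C p pbar V) - Q (xceil C p pbar V) ≤
      (V (sold (C : ℕ∞) p V) - Q (sold (C : ℕ∞) p V)) +
      (V ((dem V (max pbar (safeP Q C))).toNat) - Q ((dem V (max pbar (safeP Q C))).toNat)) := by
  set r := max pbar (safeP Q C) with hrdef
  have hr : 0 < r := lt_of_lt_of_le hpbar (le_max_left _ _)
  have hDr_ne : dem V r ≠ ⊤ := dem_ne_top hV hr
  set e := (dem V r).toNat with hedef
  have he_coe : (e : ℕ∞) = dem V r := ENat.coe_toNat hDr_ne
  have h_e_marg : ∀ k, 1 ≤ k → k ≤ e → safeP Q C ≤ marg V k := by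
    intro k hk1 hke
    have : (k : ℕ∞) ≤ dem V r := by
      rw [← he_coe]
      exact_mod_cast hke
    exact le_trans (le_max_right _ _) ((dem_le_iff hV hk1).1 this)
  by_cases hcase : (C : ℕ∞) ≤ dem V pbar
  · -- ceiling binds: x = dem(pbar)
    have hdne : dem V pbar ≠ ⊤ := dem_ne_top hV hpbar
    set x := (dem V pbar).toNat with hxdef
    have hx_coe : (x : ℕ∞) = dem V pbar := ENat.coe_toNat hdne
    have hxc : xceil C p pbar V = x := if_pos hcase
    have hsold : sold (C : ℕ∞) p V = C := by
      have h1 : (C : ℕ∞) ≤ dem V p := le_trans hcase (dem_anti (le_of_lt hppbar))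
      rw [sold, min_eq_left h1]
      simp
    have hCx : C ≤ x := by
      have : (C : ℕ∞) ≤ (x : ℕ∞) := by rw [hx_coe]; exact hcase
      exact_mod_cast this
    have hex : e ≤ x := by
      have : (e : ℕ∞) ≤ (x : ℕ∞) := by
        rw [he_coe, hx_coe]; exact dem_anti (le_max_left _ _)
      exact_mod_cast this
    set m := max C e with hmdef
    have hmx : m ≤ x := max_le hCx hex
    -- the telescoping decrease from m to x
    have hstep : V x - Q x ≤ V m - Q m := by
      have hsum : (V x - Q x) - (V m - Q m)
          = ∑ k ∈ Finset.Ico m x, (marg V (k+1) - marg Q (k+1)) := by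
        rw [Finset.sum_sub_distrib]
        rw [Finset.sum_Ico_eq_sub _ hmx, Finset.sum_Ico_eq_sub _ hmx]
        rw [← sum_marg hV.1, ← sum_marg hV.1, ← sum_marg hQ.1, ← sum_marg hQ.1]
        ring
      have hterms : ∀ k ∈ Finset.Ico m x, marg V (k+1) - marg Q (k+1) ≤ 0 := by
        intro k hk
        simp only [Finset.mem_Ico] at hk
        have hkC : C ≤ k := le_trans (le_max_left _ _) hk.1
        have hke : e ≤ k := le_trans (le_max_right _ _) hk.1
        have hv_ge : pbar ≤ marg V (k+1) := by
          apply (dem_le_iff hV (by omega)).1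
          rw [← hx_coe]
          exact_mod_cast (by omega : k + 1 ≤ x)
        have hv_lt : marg V (k+1) < r := by
          by_contra hc
          push_neg at hc
          have := le_dem (V := V) (t := r) (k := k+1) (by omega) hc
          rw [← he_coe] at this
          have : k + 1 ≤ e := by exact_mod_cast this
          omega
        have hv_safe : marg V (k+1) < safeP Q C := by
          rcases lt_max_iff.1 hv_lt with h | h
          · linarith
          · exact h
        have hq_ge : safeP Q C ≤ marg Q (k+1) := safeP_le_margQ hQ hC (by omega)
        linarith
      have := Finset.sum_nonpos hterms
      linarith [hsum ▸ this]
    rw [hxc, hsold]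
    rcases le_total e C with hec | hce
    · have hm : m = C := max_eq_left hec
      have he0 : 0 ≤ V e - Q e := h_nonneg hV hQ hC hec h_e_marg
      rw [hm] at hstep
      linarith
    · have hm : m = e := max_eq_right hce
      have hC0 : 0 ≤ V C - Q C :=
        h_nonneg hV hQ hC (le_refl C) (fun k hk1 hkC => h_e_marg k hk1 (le_trans hkC hce))
      rw [hm] at hstep
      linarith
  · -- ceiling slack: xceil = sold, just need nonneg extra term
    have hxc : xceil C p pbar V = sold (C : ℕ∞) p V := if_neg hcase
    have heC : e ≤ C := by
      have h1 : dem V r < (C : ℕ∞) := lt_of_le_of_lt (dem_anti (le_max_left _ _)) (not_le.1 hcase)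
      rw [← he_coe] at h1
      exact le_of_lt (by exact_mod_cast h1)
    have he0 : 0 ≤ V e - Q e := h_nonneg hV hQ hC heC h_e_marg
    rw [hxc]
    linarith

-- Measurability lemmas
lemma meas_marg_ge (t : ℝ) (m : ℕ) : MeasurableSet {V : ℕ → ℝ | t ≤ marg V m} := by
  have hm : Measurable fun V : ℕ → ℝ => marg V m :=
    (measurable_pi_apply m).sub (measurable_pi_apply (m - 1))
  exact measurableSet_le measurable_const hm

lemma meas_dem_ge (t : ℝ) (k : ℕ) (hk : 1 ≤ k) :
    MeasurableSet {V : ℕ → ℝ | (k : ℕ∞) ≤ dem V t} := by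
  have hset : {V : ℕ → ℝ | (k : ℕ∞) ≤ dem V t}
      = ⋃ m : ℕ, {V : ℕ → ℝ | k ≤ m ∧ 1 ≤ m ∧ t ≤ marg V m} := by
    ext V
    simp only [Set.mem_setOf_eq, Set.mem_iUnion]
    constructor
    · intro h
      by_contra hc
      push_neg at hc
      have h1 : dem V t ≤ ((k - 1 : ℕ) : ℕ∞) := by
        apply sSup_le
        rintro j ⟨m, rfl, hm1, hmt⟩
        have : m ≤ k - 1 := by
          by_contra hmk
          push_neg at hmk
          exact absurd hmt (not_le.2 (hc m (by omega) hm1))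
        exact_mod_cast this
      have := le_trans h h1
      have : k ≤ k - 1 := by exact_mod_cast this
      omega
    · rintro ⟨m, hkm, hm1, hmt⟩
      exact le_trans (by exact_mod_cast hkm) (le_dem hm1 hmt)
  rw [hset]
  apply MeasurableSet.iUnion
  intro m
  by_cases h : k ≤ m ∧ 1 ≤ m
  · have : {V : ℕ → ℝ | k ≤ m ∧ 1 ≤ m ∧ t ≤ marg V m} = {V : ℕ → ℝ | t ≤ marg V m} := by
      ext V; simp [h.1, h.2]
    rw [this]; exact meas_marg_ge t m
  · have : {V : ℕ → ℝ | k ≤ m ∧ 1 ≤ m ∧ t ≤ marg V m} = ∅ := by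
      ext V; simp only [Set.mem_setOf_eq, Set.mem_empty_iff_false, iff_false]
      tauto
    rw [this]; exact MeasurableSet.empty

lemma meas_sold_ge (Cn : ℕ) (t : ℝ) (n : ℕ) :
    MeasurableSet {V : ℕ → ℝ | n ≤ sold (Cn : ℕ∞) t V} := by
  rcases Nat.eq_zero_or_pos n with rfl | hn
  · simp
  have hmt : ∀ V : ℕ → ℝ, min (Cn : ℕ∞) (dem V t) ≠ ⊤ :=
    fun V => ne_top_of_le_ne_top (by simp) (min_le_left _ _)
  have hset : {V : ℕ → ℝ | n ≤ sold (Cn : ℕ∞) t V}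
      = if n ≤ Cn then {V : ℕ → ℝ | (n : ℕ∞) ≤ dem V t} else ∅ := by
    ext V
    have h1 : n ≤ sold (Cn : ℕ∞) t V ↔ (n : ℕ∞) ≤ min (Cn : ℕ∞) (dem V t) := by
      rw [sold]
      constructor
      · intro h
        calc (n : ℕ∞) ≤ ((min (Cn : ℕ∞) (dem V t)).toNat : ℕ∞) := by exact_mod_cast h
          _ = _ := ENat.coe_toNat (hmt V)
      · intro h
        have := ENat.toNat_le_toNat h (hmt V)
        simpa using this
    rw [Set.mem_setOf_eq, h1, le_min_iff]
    by_cases hc : n ≤ Cn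
    · simp [hc, Nat.cast_le]
    · simp only [hc, if_false, Set.mem_empty_iff_false, iff_false]
      intro h
      exact hc (by exact_mod_cast h.1)
  rw [hset]
  split
  · exact meas_dem_ge t n hn
  · exact MeasurableSet.empty

lemma meas_sold (Cn : ℕ) (t : ℝ) : Measurable fun V : ℕ → ℝ => sold (Cn : ℕ∞) t V := by
  apply measurable_to_countable'
  intro n
  have : (fun V : ℕ → ℝ => sold (Cn : ℕ∞) t V) ⁻¹' {n}
      = {V : ℕ → ℝ | n ≤ sold (Cn : ℕ∞) t V} \ {V : ℕ → ℝ | n + 1 ≤ sold (Cn : ℕ∞) t V} := by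
    ext V
    simp only [Set.mem_preimage, Set.mem_singleton_iff, Set.mem_diff, Set.mem_setOf_eq]
    omega
  rw [this]
  exact (meas_sold_ge Cn t n).diff (meas_sold_ge Cn t (n + 1))

lemma meas_demN (t : ℝ) : Measurable fun V : ℕ → ℝ => (dem V t).toNat := by
  apply measurable_to_countable'
  intro n
  rcases Nat.eq_zero_or_pos n with rfl | hn
  · have : (fun V : ℕ → ℝ => (dem V t).toNat) ⁻¹' {0}
        = {V : ℕ → ℝ | (1 : ℕ∞) ≤ dem V t}ᶜ ∪ ⋂ m : ℕ, {V : ℕ → ℝ | (m + 1 : ℕ) ≤ dem V t} := by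
      ext V
      simp only [Set.mem_preimage, Set.mem_singleton_iff, Set.mem_union, Set.mem_compl_iff,
        Set.mem_iInter, Set.mem_setOf_eq]
      rcases eq_or_ne (dem V t) ⊤ with htop | htop
      · simp only [htop]
        constructor
        · intro _; right; intro m; exact le_top
        · intro _; rfl
      · constructor
        · intro h
          left
          have hd : dem V t = ((0 : ℕ) : ℕ∞) := by rw [← ENat.coe_toNat htop, h]
          rw [hd]
          intro hc
          exact absurd (by exact_mod_cast hc : (1:ℕ) ≤ 0) (by omega)
        · rintro (h | h)
          · by_contra hc
            apply h
            rw [← ENat.coe_toNat htop]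
            exact_mod_cast (by omega : (1:ℕ) ≤ (dem V t).toNat)
          · have h2 := h ((dem V t).toNat)
            rw [← ENat.coe_toNat htop] at h2
            have : ((dem V t).toNat + 1 : ℕ) ≤ (dem V t).toNat := by exact_mod_cast h2
            omega
    rw [this]
    exact ((meas_dem_ge t 1 le_rfl).compl).union
      (MeasurableSet.iInter fun m => meas_dem_ge t (m + 1) (by omega))
  · have : (fun V : ℕ → ℝ => (dem V t).toNat) ⁻¹' {n}
        = ({V : ℕ → ℝ | (n : ℕ∞) ≤ dem V t} \ {V : ℕ → ℝ | ((n + 1 : ℕ) : ℕ∞) ≤ dem V t}) := by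
      ext V
      simp only [Set.mem_preimage, Set.mem_singleton_iff, Set.mem_diff, Set.mem_setOf_eq]
      constructor
      · intro h
        have htop : dem V t ≠ ⊤ := by
          intro hc; rw [hc] at h; simp at h; omega
        rw [← ENat.coe_toNat htop, h]
        constructor
        · exact le_rfl
        · intro hc
          have : n + 1 ≤ n := by exact_mod_cast hc
          omega
      · rintro ⟨h1, h2⟩
        have htop : dem V t ≠ ⊤ := by
          intro hc; rw [hc] at h2; exact h2 le_top
        rw [← ENat.coe_toNat htop] at h1 h2
        have h1' : n ≤ (dem V t).toNat := by exact_mod_cast h1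
        have h2' : ¬ (n + 1 ≤ (dem V t).toNat) := fun hc => h2 (by exact_mod_cast hc)
        omega
    rw [this]
    exact (meas_dem_ge t n hn).diff (meas_dem_ge t (n + 1) (by omega))

lemma meas_xceil (Cn : ℕ) (hCn : 1 ≤ Cn) (t tb : ℝ) :
    Measurable fun V : ℕ → ℝ => xceil Cn t tb V := by
  have hs : MeasurableSet {V : ℕ → ℝ | (Cn : ℕ∞) ≤ dem V tb} := meas_dem_ge tb Cn hCn
  exact Measurable.ite hs (meas_demN tb) (meas_sold Cn t)

lemma meas_eval {s : (ℕ → ℝ) → ℕ} (hs : Measurable s) :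
    Measurable fun V : ℕ → ℝ => V (s V) := by
  intro t ht
  have : (fun V : ℕ → ℝ => V (s V)) ⁻¹' t
      = ⋃ n : ℕ, (s ⁻¹' {n}) ∩ ((fun V : ℕ → ℝ => V n) ⁻¹' t) := by
    ext V
    simp only [Set.mem_preimage, Set.mem_iUnion, Set.mem_inter_iff, Set.mem_singleton_iff]
    constructor
    · intro h; exact ⟨s V, rfl, h⟩
    · rintro ⟨n, rfl, h⟩; exact h
  rw [this]
  exact MeasurableSet.iUnion fun n =>
    (hs (MeasurableSet.singleton n)).inter (measurable_pi_apply n ht)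

lemma meas_isValuation : MeasurableSet {V : ℕ → ℝ | IsValuation V} := by
  have h0 : MeasurableSet {V : ℕ → ℝ | V 0 = 0} := by
    show MeasurableSet ((fun V : ℕ → ℝ => V 0) ⁻¹' {(0:ℝ)})
    exact measurable_pi_apply 0 (measurableSet_singleton (0:ℝ))
  have h1 : MeasurableSet {V : ℕ → ℝ | Monotone V} := by
    have : {V : ℕ → ℝ | Monotone V} = ⋂ i : ℕ, {V : ℕ → ℝ | V i ≤ V (i + 1)} := by
      ext V
      simp only [Set.mem_setOf_eq, Set.mem_iInter]
      exact ⟨fun h i => h (Nat.le_succ i), fun h => monotone_nat_of_le_succ h⟩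
    rw [this]
    exact MeasurableSet.iInter fun i =>
      measurableSet_le (measurable_pi_apply i) (measurable_pi_apply (i + 1))
  have h2 : MeasurableSet {V : ℕ → ℝ | ∀ j : ℕ, 1 ≤ j → marg V (j + 1) ≤ marg V j} := by
    have : {V : ℕ → ℝ | ∀ j : ℕ, 1 ≤ j → marg V (j + 1) ≤ marg V j}
        = ⋂ j : ℕ, {V : ℕ → ℝ | 1 ≤ j → marg V (j + 1) ≤ marg V j} := by
      ext V; simp
    rw [this]
    apply MeasurableSet.iInter
    intro j
    by_cases hj : 1 ≤ j
    · have : {V : ℕ → ℝ | 1 ≤ j → marg V (j + 1) ≤ marg V j}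
          = {V : ℕ → ℝ | marg V (j + 1) ≤ marg V j} := by
        ext V; simp [hj]
      rw [this]
      exact measurableSet_le
        ((measurable_pi_apply (j + 1)).sub (measurable_pi_apply (j + 1 - 1)))
        ((measurable_pi_apply j).sub (measurable_pi_apply (j - 1)))
    · have : {V : ℕ → ℝ | 1 ≤ j → marg V (j + 1) ≤ marg V j} = Set.univ := by
        ext V; simp [hj]
      rw [this]
      exact MeasurableSet.univ
  have h3 : MeasurableSet {V : ℕ → ℝ | ∃ N : ℕ, ∀ j : ℕ, N ≤ j → marg V j = 0} := by
    have : {V : ℕ → ℝ | ∃ N : ℕ, ∀ j : ℕ, N ≤ j → marg V j = 0}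
        = ⋃ N : ℕ, ⋂ j : ℕ, {V : ℕ → ℝ | N ≤ j → marg V j = 0} := by
      ext V; simp
    rw [this]
    apply MeasurableSet.iUnion
    intro N
    apply MeasurableSet.iInter
    intro j
    by_cases hj : N ≤ j
    · have : {V : ℕ → ℝ | N ≤ j → marg V j = 0} = {V : ℕ → ℝ | marg V j = 0} := by
        ext V; simp [hj]
      rw [this]
      show MeasurableSet ((fun V : ℕ → ℝ => V j - V (j - 1)) ⁻¹' {(0:ℝ)})
      exact ((measurable_pi_apply j).sub (measurable_pi_apply (j - 1)))
        (measurableSet_singleton (0:ℝ))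
    · have : {V : ℕ → ℝ | N ≤ j → marg V j = 0} = Set.univ := by
        ext V; simp [hj]
      rw [this]
      exact MeasurableSet.univ
  have : {V : ℕ → ℝ | IsValuation V}
      = {V : ℕ → ℝ | V 0 = 0} ∩ ({V : ℕ → ℝ | Monotone V}
        ∩ ({V : ℕ → ℝ | ∀ j : ℕ, 1 ≤ j → marg V (j + 1) ≤ marg V j}
          ∩ {V : ℕ → ℝ | ∃ N : ℕ, ∀ j : ℕ, N ≤ j → marg V j = 0})) := by
    ext V
    exact Iff.rfl
  rw [this]
  exact h0.inter (h1.inter (h2.inter h3))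

/-- For every cap-and-price auction `M(C,p,pbar)` there is a no-ceiling
auction `M(C',p')` (with `C' ∈ {1,2,...} ∪ {∞}`, and `p' > 0` if `C' = ∞`) whose
truth-telling expected welfare is at least half that of `M(C,p,pbar)`. -/
theorem stmt0 (F : Measure (ℕ → ℝ)) (hprob : IsProbabilityMeasure F)
    (hval : F {V | IsValuation V} = 1)
    (Q : ℕ → ℝ) (hQ : IsCost Q)
    (hint : ∀ x : ℕ, Integrable (fun V : ℕ → ℝ => V x) F)
    (hintQ : ∀ p' : ℝ, 0 < p' → Integrable (fun V : ℕ → ℝ => Q ((dem V p').toNat)) F)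
    (hintV : ∀ p' : ℝ, 0 < p' → Integrable (fun V : ℕ → ℝ => V ((dem V p').toNat)) F)
    (C : ℕ) (hC : 1 ≤ C) (p pbar : ℝ) (hp : 0 ≤ p) (hppbar : p < pbar) (hpbar : 0 < pbar) :
    ∃ (C' : ℕ∞) (p' : ℝ), 1 ≤ C' ∧ 0 ≤ p' ∧ (C' = ⊤ → 0 < p') ∧
      (1 / 2) * Wceil F Q C p pbar ≤ Wfl F Q C' p' := by
  have hae : ∀ᵐ V ∂F, IsValuation V := by
    have hcompl : F {V : ℕ → ℝ | IsValuation V}ᶜ = 0 :=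
      (prob_compl_eq_zero_iff meas_isValuation).2 hval
    exact hcompl
  by_cases hpos : 0 < Wceil F Q C p pbar
  · -- main case
    set r := max pbar (safeP Q C) with hrdef
    have hr : 0 < r := lt_of_lt_of_le hpbar (le_max_left _ _)
    set f0 : (ℕ → ℝ) → ℝ := fun V => V (xceil C p pbar V) - Q (xceil C p pbar V) with hf0
    set f1 : (ℕ → ℝ) → ℝ := fun V => V (sold (C:ℕ∞) p V) - Q (sold (C:ℕ∞) p V) with hf1
    set f2 : (ℕ → ℝ) → ℝ := fun V => V ((dem V r).toNat) - Q ((dem V r).toNat) with hf2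
    have hInt2 : Integrable f2 F := (hintV r hr).sub (hintQ r hr)
    have hInt1 : Integrable f1 F := by
      have hmeas : AEStronglyMeasurable f1 F := by
        apply Measurable.aestronglyMeasurable
        exact (meas_eval (meas_sold C p)).sub (measurable_from_nat.comp (meas_sold C p))
      apply Integrable.mono' (g := fun V => ∑ x ∈ Finset.range (C+1), (|V x| + |Q x|))
        ?_ hmeas ?_
      · apply integrable_finset_sum
        intro x _
        exact ((hint x).abs.add (integrable_const _))
      · apply Filter.Eventually.of_forall
        intro V
        have hsC : sold (C:ℕ∞) p V ∈ Finset.range (C+1) := by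
          simp only [Finset.mem_range]
          have : sold (C:ℕ∞) p V ≤ C := ENat.toNat_le_of_le_coe (min_le_left _ _)
          omega
        have h1 : |V (sold (C:ℕ∞) p V)| + |Q (sold (C:ℕ∞) p V)|
            ≤ ∑ x ∈ Finset.range (C+1), (|V x| + |Q x|) := by
          apply Finset.single_le_sum (f := fun x => |V x| + |Q x|) ?_ hsC
          intro i _
          positivity
        calc ‖f1 V‖ ≤ |V (sold (C:ℕ∞) p V)| + |Q (sold (C:ℕ∞) p V)| := by
              rw [hf1]; exact abs_sub _ _
          _ ≤ _ := h1
    have hInt0 : Integrable f0 F := by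
      by_contra hni
      rw [Wceil, integral_undef hni] at hpos
      exact lt_irrefl 0 hpos
    have hle : f0 ≤ᵐ[F] fun V => f1 V + f2 V := by
      filter_upwards [hae] with V hV
      exact key_pointwise hV hQ hC hp hppbar hpbar
    have hWceil : Wceil F Q C p pbar ≤ Wfl F Q (C:ℕ∞) p + Wfl F Q ⊤ r := by
      have h1 : Wceil F Q C p pbar ≤ ∫ V, (f1 V + f2 V) ∂F :=
        integral_mono_ae hInt0 (hInt1.add hInt2) hle
      rw [integral_add hInt1 hInt2] at h1
      have h2 : Wfl F Q ⊤ r = ∫ V, f2 V ∂F := by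
        rw [Wfl]
        congr 1
        ext V
        rw [hf2, sold, min_eq_right le_top]
      rw [h2]
      exact h1
    rcases le_total (Wfl F Q (C:ℕ∞) p) (Wfl F Q ⊤ r) with hcmp | hcmp
    · refine ⟨⊤, r, le_top, le_of_lt hr, fun _ => hr, ?_⟩
      linarith
    · refine ⟨(C:ℕ∞), p, ?_, hp, ?_, ?_⟩
      · exact_mod_cast hC
      · intro h; exact absurd h (ENat.coe_ne_top C)
      · linarith
  · -- Wceil ≤ 0 : use the trivial safe mechanism M(1, Q 1)
    push_neg at hpos
    have hQ1 : 0 ≤ Q 1 := by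
      have := hQ.2.1 (Nat.zero_le 1)
      rw [hQ.1] at this
      exact this
    refine ⟨1, Q 1, le_rfl, hQ1, ?_, ?_⟩
    · intro h
      exact absurd h (by simp)
    · have hnn : 0 ≤ Wfl F Q 1 (Q 1) := by
        apply integral_nonneg_of_ae
        filter_upwards [hae] with V hV
        set s := sold (1:ℕ∞) (Q 1) V with hs
        have hs1 : s ≤ 1 := by
          rw [hs, sold]
          exact ENat.toNat_le_of_le_coe (by exact_mod_cast min_le_left _ _)
        interval_cases s
        · simp only [Pi.zero_apply]
          rw [hV.1, hQ.1]
          norm_num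
        · have hmin : min (1:ℕ∞) (dem V (Q 1)) = 1 := by
            have hne : min (1:ℕ∞) (dem V (Q 1)) ≠ ⊤ :=
              ne_top_of_le_ne_top (by simp) (min_le_left _ _)
            have hco := ENat.coe_toNat hne
            simp only [sold] at hs
            rw [← hco, ← hs]
            exact Nat.cast_one
          have hdem : (1:ℕ∞) ≤ dem V (Q 1) := min_eq_left_iff.1 hmin
          have hm : Q 1 ≤ marg V 1 := (dem_le_iff hV le_rfl).1 hdem
          have : marg V 1 = V 1 := by rw [marg]; simp [hV.1]
          simp only [Pi.zero_apply]
          linarith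
      linarith

end
end

section
/- For every integer cap C ≥ 1 and every price floor p ≥ 0, the truth-telling expected welfare satisfies the decomposition bound W(M(C,p)) ≤ (1A) + (1B) + (1C). -/
open MeasureTheory ProbabilityTheory

noncomputable section

/-!
Pointwise in `V`: if the demand at the floor reaches the cap, `C` licenses are sold and the
welfare is exactly the integrand of (1A). Otherwise `d = d_V(p)` licenses are sold, and
`θ_V ≤ d`; since `Q` is convex with `Q 0 = 0` it is superadditive, so
`Q d ≥ Q θ_V + Q (d - θ_V)`, which splits the welfare into the integrands of (1B) and (1C).
Integrating only needs integrability: each integrand evaluates `V` and `Q` at a measurable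
index bounded by `C`, hence is a finite sum of indicators of integrable functions.
-/

theorem integrable_comp_index {Ω ι E : Type*} [MeasurableSpace Ω] [MeasurableSpace ι]
    [MeasurableSingletonClass ι] [NormedAddCommGroup E] {μ : Measure Ω} {X : ι → Ω → E}
    {N : Ω → ι} {t : Finset ι} (hX : ∀ i ∈ t, Integrable (X i) μ) (hN : Measurable N)
    (hNt : ∀ᵐ ω ∂μ, N ω ∈ t) : Integrable (fun ω => X (N ω) ω) μ := by
  refine (integrable_finsetSum t fun i hi =>
    (hX i hi).indicator (hN (measurableSet_singleton i))).congr ?_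
  filter_upwards [hNt] with ω hω
  rw [Finset.sum_eq_single_of_mem (N ω) hω]
  · exact Set.indicator_of_mem (s := N ⁻¹' {N ω}) rfl _
  · exact fun i _ hi => Set.indicator_of_notMem (s := N ⁻¹' {i}) (Ne.symm hi) _

theorem MeasureTheory.IntegrableOn.integrable_ite {Ω E : Type*} [MeasurableSpace Ω]
    [NormedAddCommGroup E] {μ : Measure Ω} {P : Ω → Prop} [DecidablePred P] {f : Ω → E}
    (hf : IntegrableOn f {x | P x} μ) (hP : MeasurableSet {x | P x}) :
    Integrable (fun x => if P x then f x else 0) μ := by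
  refine (hf.integrable_indicator hP).congr (.of_forall fun x => ?_)
  simp [Set.indicator_apply]

theorem IsCost.monotone_increment {Q : ℕ → ℝ} (hQ : IsCost Q) :
    Monotone fun y => Q (y + 1) - Q y :=
  monotone_nat_of_le_succ fun y => by simpa using hQ.2.2 (y + 1) (by omega)

theorem IsCost.add_le_apply_add {Q : ℕ → ℝ} (hQ : IsCost Q) (a b : ℕ) :
    Q a + Q b ≤ Q (a + b) := by
  induction b with
  | zero => simp [hQ.1]
  | succ b ih =>
    have := hQ.monotone_increment (Nat.le_add_left b a)
    rw [← add_assoc]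
    linarith

theorem measurable_marg (k : ℕ) : Measurable fun V : ℕ → ℝ => marg V k :=
  (measurable_pi_apply k).sub (measurable_pi_apply (k - 1))

theorem lt_dem_iff {V : ℕ → ℝ} {q : ℝ} {n : ℕ} :
    (n : ℕ∞) < dem V q ↔ ∃ k : ℕ, n < k ∧ q ≤ marg V k := by
  simp only [dem, lt_sSup_iff, Set.mem_ofPred_eq]
  constructor
  · rintro ⟨_, ⟨k, rfl, -, hk⟩, hnk⟩
    exact ⟨k, by exact_mod_cast hnk, hk⟩
  · rintro ⟨k, hnk, hk⟩
    exact ⟨k, ⟨k, rfl, by omega, hk⟩, by exact_mod_cast hnk⟩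

theorem measurableSet_lt_dem (q : ℝ) (n : ℕ) :
    MeasurableSet {V : ℕ → ℝ | (n : ℕ∞) < dem V q} := by
  simp only [lt_dem_iff, Set.ofPred_exists, Set.ofPred_and]
  exact .iUnion fun k => (MeasurableSet.const _).inter
    (measurableSet_le measurable_const (measurable_marg k))

theorem measurable_dem (q : ℝ) : Measurable fun V : ℕ → ℝ => dem V q := by
  refine measurable_to_countable' fun x => ?_
  induction x using ENat.recTopCoe with
  | top =>
    have : (fun V => dem V q) ⁻¹' {⊤} = ⋂ n : ℕ, {V | (n : ℕ∞) < dem V q} := by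
      ext V
      simp [ENat.eq_top_iff_forall_gt]
    rw [this]
    exact .iInter fun n => measurableSet_lt_dem q n
  | coe n =>
    cases n with
    | zero =>
      have : (fun V => dem V q) ⁻¹' {((0 : ℕ) : ℕ∞)} = {V | ((0 : ℕ) : ℕ∞) < dem V q}ᶜ := by
        ext V
        simp [pos_iff_ne_zero]
      rw [this]
      exact (measurableSet_lt_dem q 0).compl
    | succ m =>
      have : (fun V => dem V q) ⁻¹' {((m + 1 : ℕ) : ℕ∞)} =
          {V | (m : ℕ∞) < dem V q} \ {V | ((m + 1 : ℕ) : ℕ∞) < dem V q} := by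
        ext V
        simp only [Set.mem_preimage, Set.mem_singleton_iff, Set.mem_sdiff, Set.mem_ofPred_eq,
          not_lt]
        rw [le_antisymm_iff, ← ENat.add_one_le_iff (ENat.natCast_ne_top m)]
        push_cast
        tauto
      rw [this]
      exact (measurableSet_lt_dem q m).diff (measurableSet_lt_dem q (m + 1))

theorem measurableSet_setOf_dem (q : ℝ) (P : ℕ∞ → Prop) :
    MeasurableSet {V : ℕ → ℝ | P (dem V q)} :=
  measurable_dem q .of_discrete

theorem measurable_sold (C : ℕ∞) (p : ℝ) : Measurable (sold C p) :=
  (Measurable.of_discrete (f := fun d => (min C d).toNat)).comp (measurable_dem p)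

theorem measurable_thetaN (Q : ℕ → ℝ) (C : ℕ) (p : ℝ) : Measurable (thetaN Q C p) :=
  (Measurable.of_discrete (f := fun d : ℕ∞ × ℕ∞ => (min d.1 d.2).toNat)).comp
    ((measurable_dem p).prodMk (measurable_dem _))

theorem sold_le (C : ℕ) (p : ℝ) (V : ℕ → ℝ) : sold C p V ≤ C :=
  ENat.toNat_le_of_le_natCast (min_le_left _ _)

theorem toNat_dem_le {V : ℕ → ℝ} {p : ℝ} {C : ℕ} (h : dem V p < C) : (dem V p).toNat ≤ C :=
  ENat.toNat_le_of_le_natCast h.le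

theorem thetaN_le_toNat_dem {Q : ℕ → ℝ} {V : ℕ → ℝ} {p : ℝ} {C : ℕ} (h : dem V p < C) :
    thetaN Q C p V ≤ (dem V p).toNat :=
  ENat.toNat_le_toNat (min_le_left _ _) (h.trans (ENat.natCast_lt_top C)).ne

theorem thetaN_le {Q : ℕ → ℝ} {V : ℕ → ℝ} {p : ℝ} {C : ℕ} (h : dem V p < C) :
    thetaN Q C p V ≤ C :=
  (thetaN_le_toNat_dem h).trans (toNat_dem_le h)

theorem welfare_le_decomposition {Q : ℕ → ℝ} (hQ : IsCost Q) (C : ℕ) (p : ℝ) (V : ℕ → ℝ) :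
    V (sold C p V) - Q (sold C p V) ≤
      (if (C : ℕ∞) ≤ dem V p then V C - Q C else 0) +
      (if dem V p < (C : ℕ∞) then V (thetaN Q C p V) - Q (thetaN Q C p V) else 0) +
      (if dem V p < (C : ℕ∞) then
          V ((dem V p).toNat) - V (thetaN Q C p V) - Q ((dem V p).toNat - thetaN Q C p V)
        else 0) := by
  by_cases hCd : (C : ℕ∞) ≤ dem V p
  · simp [sold, hCd, not_lt.2 hCd]
  · have hdC : dem V p < C := not_le.1 hCd
    have hsplit := hQ.add_le_apply_add (thetaN Q C p V) ((dem V p).toNat - thetaN Q C p V)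
    rw [Nat.add_sub_cancel' (thetaN_le_toNat_dem hdC)] at hsplit
    simp only [sold, min_eq_right hdC.le, hCd, hdC, if_true, if_false]
    linarith

section Integrability

variable {F : Measure (ℕ → ℝ)} [IsFiniteMeasure F] (Q : ℕ → ℝ) (C : ℕ) (p : ℝ)

theorem integrable_welfare_sold (hint : ∀ x : ℕ, Integrable (fun V : ℕ → ℝ => V x) F) :
    Integrable (fun V => V (sold C p V) - Q (sold C p V)) F :=
  integrable_comp_index (X := fun k V => V k - Q k) (t := Finset.range (C + 1))
    (fun k _ => (hint k).sub (integrable_const _)) (measurable_sold C p)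
    (.of_forall fun V => Finset.mem_range_succ_iff.2 (sold_le C p V))

theorem integrable_welfare_cap (hint : ∀ x : ℕ, Integrable (fun V : ℕ → ℝ => V x) F) :
    Integrable (fun V => if (C : ℕ∞) ≤ dem V p then V C - Q C else 0) F :=
  ((hint C).sub (integrable_const _)).integrableOn.integrable_ite
    (measurableSet_setOf_dem p (C ≤ ·))

theorem integrable_welfare_thetaN (hint : ∀ x : ℕ, Integrable (fun V : ℕ → ℝ => V x) F) :
    Integrable (fun V => if dem V p < (C : ℕ∞) then
      V (thetaN Q C p V) - Q (thetaN Q C p V) else 0) F := by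
  have hs := measurableSet_setOf_dem p (· < C)
  refine IntegrableOn.integrable_ite ?_ hs
  exact integrable_comp_index (X := fun k V => V k - Q k) (t := Finset.range (C + 1))
    (fun k _ => ((hint k).sub (integrable_const _)).restrict) (measurable_thetaN Q C p)
    (ae_restrict_of_forall_mem hs fun V hV => Finset.mem_range_succ_iff.2 (thetaN_le hV))

theorem integrable_welfare_residual (hint : ∀ x : ℕ, Integrable (fun V : ℕ → ℝ => V x) F) :
    Integrable (fun V => if dem V p < (C : ℕ∞) then
      V ((dem V p).toNat) - V (thetaN Q C p V) - Q ((dem V p).toNat - thetaN Q C p V)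
    else 0) F := by
  have hs := measurableSet_setOf_dem p (· < C)
  refine IntegrableOn.integrable_ite ?_ hs
  exact integrable_comp_index (X := fun kj V => V kj.1 - V kj.2 - Q (kj.1 - kj.2))
    (N := fun V => ((dem V p).toNat, thetaN Q C p V))
    (t := Finset.range (C + 1) ×ˢ Finset.range (C + 1))
    (fun kj _ => (((hint kj.1).sub (hint kj.2)).sub (integrable_const _)).restrict)
    (((Measurable.of_discrete (f := ENat.toNat)).comp (measurable_dem p)).prodMk
      (measurable_thetaN Q C p))
    (ae_restrict_of_forall_mem hs fun V hV => Finset.mem_product.2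
      ⟨Finset.mem_range_succ_iff.2 (toNat_dem_le hV),
        Finset.mem_range_succ_iff.2 (thetaN_le hV)⟩)

end Integrability

theorem stmt6_general (F : Measure (ℕ → ℝ)) (hprob : IsProbabilityMeasure F)
    (hint : ∀ x : ℕ, Integrable (fun V : ℕ → ℝ => V x) F)
    (Q : ℕ → ℝ) (hQ : IsCost Q)
    (C : ℕ) (p : ℝ) :
    Wfl F Q (C : ℕ∞) p ≤
      (∫ V, (if (C : ℕ∞) ≤ dem V p then V C - Q C else 0) ∂F) +
      (∫ V, (if dem V p < (C : ℕ∞) then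
          V (thetaN Q C p V) - Q (thetaN Q C p V) else 0) ∂F) +
      (∫ V, (if dem V p < (C : ℕ∞) then
          V ((dem V p).toNat) - V (thetaN Q C p V) - Q ((dem V p).toNat - thetaN Q C p V)
        else 0) ∂F) := by
  have hA := integrable_welfare_cap Q C p hint
  have hB := integrable_welfare_thetaN Q C p hint
  have hC := integrable_welfare_residual Q C p hint
  refine (integral_mono (integrable_welfare_sold Q C p hint) ((hA.add hB).add hC)
    (welfare_le_decomposition hQ C p)).trans_eq ?_
  rw [integral_add' (hA.add hB) hC, integral_add' hA hB]

/-- the welfare decomposition bound `W(M(C,p)) ≤ (1A) + (1B) + (1C)`. -/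
theorem stmt6 (F : Measure (ℕ → ℝ)) (hprob : IsProbabilityMeasure F)
    (hval : F {V | IsValuation V} = 1)
    (hint : ∀ x : ℕ, Integrable (fun V : ℕ → ℝ => V x) F)
    (Q : ℕ → ℝ) (hQ : IsCost Q)
    (C : ℕ) (hC : 1 ≤ C) (p : ℝ) (hp : 0 ≤ p) :
    Wfl F Q (C : ℕ∞) p ≤
      (∫ V, (if (C : ℕ∞) ≤ dem V p then V C - Q C else 0) ∂F) +
      (∫ V, (if dem V p < (C : ℕ∞) then
          V (thetaN Q C p V) - Q (thetaN Q C p V) else 0) ∂F) +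
      (∫ V, (if dem V p < (C : ℕ∞) then
          V ((dem V p).toNat) - V (thetaN Q C p V) - Q ((dem V p).toNat - thetaN Q C p V)
        else 0) ∂F) :=
  stmt6_general F hprob hint Q hQ C p

end
end

section
/- Let V be a valuation curve, Q a social cost function, and C ≥ 1 an integer. Set P = Q(C)/C and k = min(C, d_V(P)). Then V(k) − Q(k) ≥ V(C) − Q(C). (In words: starting from the allocation of C licenses, removing every license whose marginal value is below the average cost per license Q(C)/C can only increase the welfare.) -/
open MeasureTheory ProbabilityTheory

noncomputable section

/-- Marginal costs are nondecreasing. -/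
lemma qmono (Q : ℕ → ℝ) (hQ : IsCost Q) :
    ∀ i j : ℕ, 1 ≤ i → i ≤ j → Q i - Q (i-1) ≤ Q j - Q (j-1) := by
  intro i j hi hij
  induction j with
  | zero => omega
  | succ n ih =>
    rcases Nat.lt_or_ge i (n+1) with h | h
    · have h1 : 1 ≤ n := by omega
      have := hQ.2.2 n h1
      have := ih (by omega)
      simp only [Nat.add_sub_cancel] at *
      linarith
    · have : i = n + 1 := by omega
      subst this; exact le_refl _

lemma step1 (Q : ℕ → ℝ) (hQ : IsCost Q) : ∀ k : ℕ, Q k ≤ k * (Q (k+1) - Q k) := by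
  intro k
  induction k with
  | zero => simp [hQ.1]
  | succ n ih =>
    have h1 : Q (n+1) - Q n ≤ Q (n+2) - Q (n+1) := by
      have := hQ.2.2 (n+1) (by omega)
      simpa using this
    push_cast
    nlinarith [hQ.2.1 (Nat.le_succ n)]

lemma step2 (Q : ℕ → ℝ) (hQ : IsCost Q) (k : ℕ) :
    ∀ C : ℕ, k ≤ C → ((C : ℝ) - k) * (Q (k+1) - Q k) ≤ Q C - Q k := by
  intro C hkC
  induction C with
  | zero => interval_cases k; simp
  | succ n ih =>
    rcases Nat.lt_or_ge k (n+1) with h | h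
    · have hkn : k ≤ n := by omega
      have h2 : Q (k+1) - Q k ≤ Q (n+1) - Q n := by
        have := qmono Q hQ (k+1) (n+1) (by omega) (by omega)
        simpa using this
      have := ih hkn
      push_cast
      linarith
    · have : k = n + 1 := by omega
      subst this; simp

/-- Discrete convexity with `Q 0 = 0` gives `C * Q k ≤ k * Q C` for `k ≤ C`. -/
lemma convkey (Q : ℕ → ℝ) (hQ : IsCost Q) (k C : ℕ) (hkC : k ≤ C) :
    (C : ℝ) * Q k ≤ (k : ℝ) * Q C := by
  have h1 := step1 Q hQ k
  have h2 := step2 Q hQ k C hkC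
  have hk0 : (0:ℝ) ≤ (k:ℝ) := by positivity
  have hCk : (0:ℝ) ≤ (C:ℝ) - k := by
    have : (k:ℝ) ≤ C := by exact_mod_cast hkC
    linarith
  nlinarith

/-- removing from an allocation of `C` licenses every license whose
marginal value is below the average cost `Q(C)/C` can only increase welfare. -/
theorem stmt8 (V : ℕ → ℝ) (hV : IsValuation V) (Q : ℕ → ℝ) (hQ : IsCost Q)
    (C : ℕ) (hC : 1 ≤ C) :
    V C - Q C ≤
      V ((min (C : ℕ∞) (dem V (Q C / C))).toNat) -
        Q ((min (C : ℕ∞) (dem V (Q C / C))).toNat) := by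
  set P := Q C / C with hP
  rcases le_or_gt (C : ℕ∞) (dem V P) with h | h
  · rw [min_eq_left h]
    simp
  · rw [min_eq_right h.le]
    have hdne : dem V P ≠ ⊤ := by
      intro ht; rw [ht] at h; exact absurd h (by simp)
    set k := (dem V P).toNat with hk
    have hkd : (k : ℕ∞) = dem V P := ENat.coe_toNat hdne
    have hkC : k < C := by
      rw [← hkd] at h; exact_mod_cast h
    have hmarg : ∀ j : ℕ, k < j → marg V j ≤ P := by
      intro j hj
      by_contra hlt
      push_neg at hlt
      have hmem : (j : ℕ∞) ∈ {j : ℕ∞ | ∃ m : ℕ, j = (m : ℕ∞) ∧ 1 ≤ m ∧ P ≤ marg V m} :=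
        ⟨j, rfl, by omega, hlt.le⟩
      have hle : (j : ℕ∞) ≤ dem V P := le_sSup hmem
      rw [← hkd] at hle
      have : j ≤ k := by exact_mod_cast hle
      omega
    have tele : V C - V k = ∑ j ∈ Finset.Ico k C, (V (j+1) - V j) := by
      rw [Finset.sum_Ico_eq_sub _ hkC.le, Finset.sum_range_sub, Finset.sum_range_sub]
      ring
    have hsum : V C - V k ≤ ((C : ℝ) - k) * P := by
      rw [tele]
      calc ∑ j ∈ Finset.Ico k C, (V (j+1) - V j)
          ≤ ∑ _j ∈ Finset.Ico k C, P := by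
            refine Finset.sum_le_sum fun j hj => ?_
            have hjk : k < j + 1 := by
              rw [Finset.mem_Ico] at hj; omega
            have := hmarg (j+1) hjk
            simpa [marg] using this
        _ = ((C : ℝ) - k) * P := by
            rw [Finset.sum_const, Nat.card_Ico, nsmul_eq_mul]
            have : (k : ℝ) ≤ C := by exact_mod_cast hkC.le
            push_cast [Nat.cast_sub hkC.le]
            ring
    have hC0 : (0:ℝ) < C := by exact_mod_cast hC
    have hQk : (C:ℝ) * Q k ≤ (k:ℝ) * Q C := convkey Q hQ k C hkC.le
    have hcost : ((C:ℝ) - k) * P ≤ Q C - Q k := by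
      rw [hP, ← mul_div_assoc, div_le_iff₀ hC0]
      nlinarith
    linarith

end
end

section
/- Suppose the pair (C,p) is welfare-optimal, i.e., W(M(C,p)) ≥ W(M(C',p')) for every integer C' ≥ 1 and every p' ≥ 0. Then E_{V∼F}[ 1{d_V(p) ≥ C}·( V(C) − Q(C) ) ] ≥ 0; that is, the expected contribution to welfare from realizations in which all C licenses are sold is nonnegative. -/
open MeasureTheory ProbabilityTheory

noncomputable section

namespace Stmt9Aux

lemma dem_ge_iff (V : ℕ → ℝ) (p : ℝ) (s : ℕ) (hs : 1 ≤ s) :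
    (s : ℕ∞) ≤ dem V p ↔ ∃ k : ℕ, s ≤ k ∧ p ≤ marg V k := by
  constructor
  · intro h
    by_contra hc
    push_neg at hc
    have hub : dem V p ≤ ((s - 1 : ℕ) : ℕ∞) := by
      apply sSup_le
      rintro j ⟨k, rfl, hk1, hpk⟩
      have hks : k < s := by
        by_contra hk
        exact absurd hpk (not_le.mpr (hc k (le_of_not_gt hk)))
      exact_mod_cast Nat.le_pred_of_lt hks
    have : (s : ℕ∞) ≤ ((s - 1 : ℕ) : ℕ∞) := h.trans hub
    have : s ≤ s - 1 := by exact_mod_cast this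
    omega
  · rintro ⟨k, hsk, hpk⟩
    refine le_trans (show (s : ℕ∞) ≤ (k : ℕ∞) by exact_mod_cast hsk) (le_sSup ?_)
    exact ⟨k, rfl, hs.trans hsk, hpk⟩

lemma measSet_dem (p : ℝ) (s : ℕ) (hs : 1 ≤ s) :
    MeasurableSet {V : ℕ → ℝ | (s : ℕ∞) ≤ dem V p} := by
  have hrep : {V : ℕ → ℝ | (s : ℕ∞) ≤ dem V p}
      = ⋃ k : ℕ, {V : ℕ → ℝ | s ≤ k ∧ p ≤ marg V k} := by
    ext V
    simp only [Set.mem_setOf_eq, Set.mem_iUnion, dem_ge_iff V p s hs]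
  rw [hrep]
  refine MeasurableSet.iUnion fun k => ?_
  by_cases h : s ≤ k
  · have hm : Measurable fun V : ℕ → ℝ => marg V k :=
      (measurable_pi_apply k).sub (measurable_pi_apply (k - 1))
    have : {V : ℕ → ℝ | s ≤ k ∧ p ≤ marg V k} = {V : ℕ → ℝ | p ≤ marg V k} := by
      ext V; simp [h]
    rw [this]
    exact measurableSet_le measurable_const hm
  · have : {V : ℕ → ℝ | s ≤ k ∧ p ≤ marg V k} = ∅ := by
      ext V; simp [h]
    rw [this]; exact MeasurableSet.empty

lemma sold_of_ge {V : ℕ → ℝ} {p : ℝ} {C : ℕ} (h : (C : ℕ∞) ≤ dem V p) :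
    sold (C : ℕ∞) p V = C := by
  unfold sold
  rw [min_eq_left h]
  simp

lemma sold_le (V : ℕ → ℝ) (p : ℝ) (C : ℕ) : sold (C : ℕ∞) p V ≤ C := by
  unfold sold
  have h := ENat.toNat_le_toNat (min_le_left (C : ℕ∞) (dem V p)) (by simp)
  simpa using h

lemma sold_of_lt {V : ℕ → ℝ} {p : ℝ} {C : ℕ} (h : dem V p < (C : ℕ∞)) :
    sold (C : ℕ∞) p V = (dem V p).toNat := by
  unfold sold
  rw [min_eq_right h.le]

lemma sold_pred_of_lt {V : ℕ → ℝ} {p : ℝ} {C : ℕ} (hC : 1 ≤ C) (h : dem V p < (C : ℕ∞)) :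
    sold ((C - 1 : ℕ) : ℕ∞) p V = sold (C : ℕ∞) p V := by
  have hne : dem V p ≠ ⊤ := ne_top_of_lt h
  obtain ⟨d, hd0⟩ := WithTop.ne_top_iff_exists.mp hne
  have hd : ((d : ℕ) : ℕ∞) = dem V p := hd0
  have hdC : d < C := by
    rw [← hd] at h; exact_mod_cast h
  have h1 : dem V p ≤ ((C - 1 : ℕ) : ℕ∞) := by
    rw [← hd]
    have : d ≤ C - 1 := Nat.le_pred_of_lt hdC
    exact_mod_cast this
  rw [sold_of_lt h]
  unfold sold
  rw [min_eq_right h1]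

lemma sold_rep (p : ℝ) (C : ℕ) (V : ℕ → ℝ) :
    sold (C : ℕ∞) p V = ∑ s ∈ Finset.range C,
      (if ((s + 1 : ℕ) : ℕ∞) ≤ dem V p then 1 else 0) := by
  by_cases h : (C : ℕ∞) ≤ dem V p
  · rw [sold_of_ge h]
    have hone : ∀ s ∈ Finset.range C,
        (if ((s + 1 : ℕ) : ℕ∞) ≤ dem V p then (1:ℕ) else 0) = 1 := by
      intro s hs
      have hs' : ((s + 1 : ℕ) : ℕ∞) ≤ (C : ℕ∞) := by
        have := Finset.mem_range.mp hs
        exact_mod_cast this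
      rw [if_pos (hs'.trans h)]
    rw [Finset.sum_congr rfl hone]
    simp
  · have h' : dem V p < (C : ℕ∞) := not_le.mp h
    have hne : dem V p ≠ ⊤ := ne_top_of_lt h'
    obtain ⟨d, hd0⟩ := WithTop.ne_top_iff_exists.mp hne
    have hd : ((d : ℕ) : ℕ∞) = dem V p := hd0
    have hdC : d < C := by rw [← hd] at h'; exact_mod_cast h'
    rw [sold_of_lt h', ← hd]
    have hterm : ∀ s : ℕ, (if ((s + 1 : ℕ) : ℕ∞) ≤ ((d : ℕ) : ℕ∞) then (1:ℕ) else 0)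
        = if s ∈ Finset.range d then 1 else 0 := by
      intro s
      by_cases hsd : s + 1 ≤ d
      · rw [if_pos (by exact_mod_cast hsd), if_pos (Finset.mem_range.mpr (by omega))]
      · rw [if_neg (by exact_mod_cast hsd), if_neg (by simp only [Finset.mem_range]; omega)]
    simp only [hterm]
    rw [Finset.sum_ite_mem]
    have : Finset.range C ∩ Finset.range d = Finset.range d := by
      ext s; simp; omega
    rw [this]
    simp

lemma measurable_sold (p : ℝ) (C : ℕ) :
    Measurable fun V : ℕ → ℝ => sold (C : ℕ∞) p V := by
  have : (fun V : ℕ → ℝ => sold (C : ℕ∞) p V) = fun V => ∑ s ∈ Finset.range C,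
      (if ((s + 1 : ℕ) : ℕ∞) ≤ dem V p then 1 else 0) := funext (sold_rep p C)
  rw [this]
  refine Finset.measurable_sum _ fun s _ => ?_
  exact Measurable.ite (measSet_dem p (s + 1) (by omega)) measurable_const measurable_const

lemma welfare_rep (Q : ℕ → ℝ) (p : ℝ) (C : ℕ) (V : ℕ → ℝ) :
    V (sold (C : ℕ∞) p V) - Q (sold (C : ℕ∞) p V)
      = ∑ s ∈ Finset.range (C + 1),
          (if sold (C : ℕ∞) p V = s then V s - Q s else 0) := by
  rw [Finset.sum_ite_eq]
  rw [if_pos (Finset.mem_range.mpr (by have := sold_le V p C; omega))]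

lemma measurable_welfare (Q : ℕ → ℝ) (p : ℝ) (C : ℕ) :
    Measurable fun V : ℕ → ℝ =>
      V (sold (C : ℕ∞) p V) - Q (sold (C : ℕ∞) p V) := by
  have : (fun V : ℕ → ℝ => V (sold (C : ℕ∞) p V) - Q (sold (C : ℕ∞) p V))
      = fun V => ∑ s ∈ Finset.range (C + 1),
          (if sold (C : ℕ∞) p V = s then V s - Q s else 0) := funext (welfare_rep Q p C)
  rw [this]
  refine Finset.measurable_sum _ fun s _ => ?_
  have hset : MeasurableSet {V : ℕ → ℝ | sold (C : ℕ∞) p V = s} :=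
    measurable_sold p C (measurableSet_singleton s)
  exact Measurable.ite hset ((measurable_pi_apply s).sub measurable_const) measurable_const

lemma integrable_welfare (F : Measure (ℕ → ℝ)) [IsProbabilityMeasure F]
    (hint : ∀ x : ℕ, Integrable (fun V : ℕ → ℝ => V x) F)
    (Q : ℕ → ℝ) (p : ℝ) (C : ℕ) :
    Integrable (fun V : ℕ → ℝ =>
      V (sold (C : ℕ∞) p V) - Q (sold (C : ℕ∞) p V)) F := by
  have : (fun V : ℕ → ℝ => V (sold (C : ℕ∞) p V) - Q (sold (C : ℕ∞) p V))
      = fun V => ∑ s ∈ Finset.range (C + 1),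
          (if sold (C : ℕ∞) p V = s then V s - Q s else 0) := funext (welfare_rep Q p C)
  rw [this]
  refine integrable_finset_sum _ fun s _ => ?_
  have hset : MeasurableSet {V : ℕ → ℝ | sold (C : ℕ∞) p V = s} :=
    measurable_sold p C (measurableSet_singleton s)
  have : (fun V : ℕ → ℝ => if sold (C : ℕ∞) p V = s then V s - Q s else 0)
      = Set.indicator {V : ℕ → ℝ | sold (C : ℕ∞) p V = s} (fun V => V s - Q s) := by
    funext V
    rw [Set.indicator_apply]
    rfl
  rw [this]
  exact ((hint s).sub (integrable_const _)).indicator hset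

lemma integrable_ind (F : Measure (ℕ → ℝ)) [IsProbabilityMeasure F]
    (hint : ∀ x : ℕ, Integrable (fun V : ℕ → ℝ => V x) F)
    (Q : ℕ → ℝ) (p : ℝ) {C : ℕ} (hC : 1 ≤ C) (j : ℕ) :
    Integrable (fun V : ℕ → ℝ =>
      if (C : ℕ∞) ≤ dem V p then V j - Q j else 0) F := by
  have : (fun V : ℕ → ℝ => if (C : ℕ∞) ≤ dem V p then V j - Q j else 0)
      = Set.indicator {V : ℕ → ℝ | (C : ℕ∞) ≤ dem V p} (fun V => V j - Q j) := by
    funext V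
    rw [Set.indicator_apply]
    rfl
  rw [this]
  exact ((hint j).sub (integrable_const _)).indicator (measSet_dem p C hC)

lemma val_superhomog {V : ℕ → ℝ} (hV : IsValuation V) (n : ℕ) :
    (n : ℝ) * V (n + 1) ≤ ((n : ℝ) + 1) * V n := by
  induction n with
  | zero => simp [hV.1]
  | succ n ih =>
    have h1 := hV.2.2.1 (n + 1) (by omega)
    unfold marg at h1
    simp only [Nat.add_sub_cancel] at h1
    push_cast
    nlinarith [h1, mul_le_mul_of_nonneg_left h1 (show (0:ℝ) ≤ (n:ℝ) + 1 by positivity)]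

lemma cost_subhomog {Q : ℕ → ℝ} (hQ : IsCost Q) (n : ℕ) :
    ((n : ℝ) + 1) * Q n ≤ (n : ℝ) * Q (n + 1) := by
  induction n with
  | zero => simp [hQ.1]
  | succ n ih =>
    have h1 := hQ.2.2 (n + 1) (by omega)
    simp only [Nat.add_sub_cancel] at h1
    push_cast
    nlinarith [h1, mul_le_mul_of_nonneg_left h1 (show (0:ℝ) ≤ (n:ℝ) + 1 by positivity)]

lemma marg_le_first {V : ℕ → ℝ} (hV : IsValuation V) :
    ∀ k : ℕ, 1 ≤ k → marg V k ≤ marg V 1 := by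
  intro k
  induction k with
  | zero => omega
  | succ k ih =>
    intro _
    rcases Nat.eq_zero_or_pos k with hk | hk
    · subst hk; exact le_refl _
    · exact (hV.2.2.1 k hk).trans (ih hk)

lemma measurableSet_isValuation : MeasurableSet {V : ℕ → ℝ | IsValuation V} := by
  have hrep : {V : ℕ → ℝ | IsValuation V} =
      (({V : ℕ → ℝ | V 0 = 0} ∩ ⋂ n : ℕ, {V : ℕ → ℝ | V n ≤ V (n + 1)}) ∩
        ⋂ j : ℕ, ⋂ _ : 1 ≤ j, {V : ℕ → ℝ | marg V (j + 1) ≤ marg V j}) ∩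
        ⋃ N : ℕ, ⋂ j : ℕ, ⋂ _ : N ≤ j, {V : ℕ → ℝ | marg V j = 0} := by
    ext V
    simp only [Set.mem_setOf_eq, Set.mem_inter_iff, Set.mem_iInter, Set.mem_iUnion]
    constructor
    · rintro ⟨h0, hmono, hm, N, hN⟩
      exact ⟨⟨⟨h0, fun n => hmono (Nat.le_succ n)⟩, hm⟩, N, hN⟩
    · rintro ⟨⟨⟨h0, hmono⟩, hm⟩, N, hN⟩
      exact ⟨h0, monotone_nat_of_le_succ hmono, hm, N, hN⟩
  rw [hrep]
  have hmargm : ∀ j : ℕ, Measurable fun V : ℕ → ℝ => marg V j := fun j =>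
    (measurable_pi_apply j).sub (measurable_pi_apply (j - 1))
  refine MeasurableSet.inter (MeasurableSet.inter (MeasurableSet.inter ?_ ?_) ?_) ?_
  · exact (measurable_pi_apply 0) (measurableSet_singleton 0)
  · exact MeasurableSet.iInter fun n =>
      measurableSet_le (measurable_pi_apply n) (measurable_pi_apply (n + 1))
  · exact MeasurableSet.iInter fun j => MeasurableSet.iInter fun _ =>
      measurableSet_le (hmargm (j + 1)) (hmargm j)
  · exact MeasurableSet.iUnion fun N => MeasurableSet.iInter fun j =>
      MeasurableSet.iInter fun _ => (hmargm j) (measurableSet_singleton 0)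

end Stmt9Aux

open Stmt9Aux in
/-- if `(C,p)` is welfare-optimal, the expected welfare contribution
from realizations in which all `C` licenses are sold is nonnegative. -/
theorem stmt9 (F : Measure (ℕ → ℝ)) (hprob : IsProbabilityMeasure F)
    (hval : F {V | IsValuation V} = 1)
    (hint : ∀ x : ℕ, Integrable (fun V : ℕ → ℝ => V x) F)
    (Q : ℕ → ℝ) (hQ : IsCost Q)
    (C : ℕ) (p : ℝ) (hC : 1 ≤ C) (hp : 0 ≤ p)
    (hopt : ∀ (C' : ℕ) (p' : ℝ), 1 ≤ C' → 0 ≤ p' →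
      Wfl F Q (C' : ℕ∞) p' ≤ Wfl F Q (C : ℕ∞) p) :
    0 ≤ ∫ V, (if (C : ℕ∞) ≤ dem V p then V C - Q C else 0) ∂F := by
  have hae : ∀ᵐ V ∂F, IsValuation V := by
    rw [ae_iff]
    have h0 := (prob_compl_eq_zero_iff measurableSet_isValuation).mpr hval
    simpa [Set.compl_setOf] using h0
  have hgint : Integrable (fun V : ℕ → ℝ =>
      if (C : ℕ∞) ≤ dem V p then V C - Q C else 0) F := integrable_ind F hint Q p hC C
  -- nonnegativity of the full welfare (used for C = 1)
  have hWpos : 0 ≤ Wfl F Q ((1 : ℕ) : ℕ∞) p → True := fun _ => trivial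
  rcases eq_or_lt_of_le hC with hC1 | hC2
  · -- C = 1
    subst hC1
    have heq : ∫ V, (if ((1:ℕ) : ℕ∞) ≤ dem V p then V 1 - Q 1 else 0) ∂F
        = Wfl F Q ((1:ℕ) : ℕ∞) p := by
      refine integral_congr_ae ?_
      filter_upwards [hae] with V hV
      by_cases h : ((1:ℕ) : ℕ∞) ≤ dem V p
      · rw [if_pos h, sold_of_ge h]
      · rw [if_neg h]
        have h' : dem V p < ((1:ℕ) : ℕ∞) := not_le.mp h
        have hs0 : sold ((1:ℕ) : ℕ∞) p V = 0 := by
          rw [sold_of_lt h']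
          have : dem V p = 0 := by
            have := ENat.lt_one_iff_eq_zero.mp (by exact_mod_cast h')
            exact this
          simp [this]
        rw [hs0, hV.1, hQ.1]
        ring
    rw [heq]
    -- welfare at huge prices tends to 0
    have hlim : Filter.Tendsto (fun n : ℕ => Wfl F Q ((1:ℕ) : ℕ∞) (n : ℝ))
        Filter.atTop (nhds 0) := by
      have h0 : (0:ℝ) = ∫ V, (0:ℝ) ∂F := by simp
      rw [h0]
      apply tendsto_integral_of_dominated_convergence
        (fun V : ℕ → ℝ => |V 0| + |V 1| + |Q 0| + |Q 1|)
      · intro n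
        exact (measurable_welfare Q (n : ℝ) 1).aestronglyMeasurable
      · exact (((hint 0).abs.add (hint 1).abs).add (integrable_const _)).add
          (integrable_const _)
      · intro n
        refine Filter.Eventually.of_forall fun V => ?_
        have hs := sold_le V (n : ℝ) 1
        have hb : ∀ s : ℕ, s ≤ 1 → ‖V s - Q s‖ ≤ |V 0| + |V 1| + |Q 0| + |Q 1| := by
          intro s hs1
          have hn := norm_sub_le (V s) (Q s)
          simp only [Real.norm_eq_abs] at hn ⊢
          rcases Nat.le_one_iff_eq_zero_or_eq_one.mp hs1 with rfl | rfl
          · have := abs_nonneg (V 1); have := abs_nonneg (Q 1); linarith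
          · have := abs_nonneg (V 0); have := abs_nonneg (Q 0); linarith
        exact hb _ hs
      · filter_upwards [hae] with V hV
        refine tendsto_atTop_of_eventually_const
          (i₀ := ⌈marg V 1⌉₊ + 1) fun n hn => ?_
        have hdem : ¬ ((1:ℕ) : ℕ∞) ≤ dem V (n : ℝ) := by
          rw [dem_ge_iff V (n : ℝ) 1 le_rfl]
          rintro ⟨k, hk1, hpk⟩
          have h1 : marg V k ≤ marg V 1 := marg_le_first hV k hk1
          have h2 : marg V 1 ≤ (⌈marg V 1⌉₊ : ℝ) := Nat.le_ceil _
          have h3 : ((⌈marg V 1⌉₊ : ℕ) : ℝ) < (n : ℝ) := by exact_mod_cast hn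
          linarith
        have h' : dem V (n : ℝ) < ((1:ℕ) : ℕ∞) := not_le.mp hdem
        have hs0 : sold ((1:ℕ) : ℕ∞) (n : ℝ) V = 0 := by
          rw [sold_of_lt h']
          have : dem V (n : ℝ) = 0 := ENat.lt_one_iff_eq_zero.mp (by exact_mod_cast h')
          simp [this]
        rw [hs0, hV.1, hQ.1]
        ring
    refine le_of_tendsto hlim (Filter.Eventually.of_forall fun n => ?_)
    exact hopt 1 (n : ℝ) le_rfl (by positivity)
  · -- 2 ≤ C
    obtain ⟨n, rfl⟩ : ∃ n : ℕ, C = n + 1 := ⟨C - 1, by omega⟩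
    have hn1 : 1 ≤ n := by omega
    have hfC := integrable_welfare F hint Q p (n + 1)
    have hfD := integrable_welfare F hint Q p n
    have hh' := integrable_ind F hint Q p hC n
    have hcast : ((n + 1 - 1 : ℕ) : ℕ∞) = (n : ℕ∞) := by norm_num
    have hid : ∀ V : ℕ → ℝ,
        (if ((n + 1 : ℕ) : ℕ∞) ≤ dem V p then V (n + 1) - Q (n + 1) else 0)
        = ((V (sold ((n + 1 : ℕ) : ℕ∞) p V) - Q (sold ((n + 1 : ℕ) : ℕ∞) p V))
            - (V (sold ((n : ℕ) : ℕ∞) p V) - Q (sold ((n : ℕ) : ℕ∞) p V)))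
          + (if ((n + 1 : ℕ) : ℕ∞) ≤ dem V p then V n - Q n else 0) := by
      intro V
      by_cases h : ((n + 1 : ℕ) : ℕ∞) ≤ dem V p
      · have h2 : ((n : ℕ) : ℕ∞) ≤ dem V p :=
          le_trans (by exact_mod_cast Nat.le_succ n) h
        rw [if_pos h, if_pos h, sold_of_ge h, sold_of_ge h2]
        ring
      · have h3 := sold_pred_of_lt (C := n + 1) (by omega) (not_le.mp h)
        rw [if_neg h, if_neg h]
        simp only [Nat.add_sub_cancel] at h3
        rw [h3]
        ring
    have hsplit : ∫ V, (if ((n + 1 : ℕ) : ℕ∞) ≤ dem V p then V (n + 1) - Q (n + 1) else 0) ∂F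
        = (Wfl F Q ((n + 1 : ℕ) : ℕ∞) p - Wfl F Q ((n : ℕ) : ℕ∞) p)
          + ∫ V, (if ((n + 1 : ℕ) : ℕ∞) ≤ dem V p then V n - Q n else 0) ∂F := by
      have hsub : Integrable (fun V : ℕ → ℝ =>
          (V (sold ((n + 1 : ℕ) : ℕ∞) p V) - Q (sold ((n + 1 : ℕ) : ℕ∞) p V))
            - (V (sold ((n : ℕ) : ℕ∞) p V) - Q (sold ((n : ℕ) : ℕ∞) p V))) F := hfC.sub hfD
      rw [show (fun V : ℕ → ℝ =>
          if ((n + 1 : ℕ) : ℕ∞) ≤ dem V p then V (n + 1) - Q (n + 1) else 0)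
          = fun V => ((V (sold ((n + 1 : ℕ) : ℕ∞) p V) - Q (sold ((n + 1 : ℕ) : ℕ∞) p V))
            - (V (sold ((n : ℕ) : ℕ∞) p V) - Q (sold ((n : ℕ) : ℕ∞) p V)))
          + (if ((n + 1 : ℕ) : ℕ∞) ≤ dem V p then V n - Q n else 0) from funext hid]
      rw [integral_add hsub hh', integral_sub hfC hfD]
      rfl
    have hWmono : 0 ≤ Wfl F Q ((n + 1 : ℕ) : ℕ∞) p - Wfl F Q ((n : ℕ) : ℕ∞) p := by
      have := hopt n p hn1 hp
      linarith
    have hCpos : (0 : ℝ) < (n : ℝ) + 1 := by positivity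
    have hpt : ∀ᵐ V ∂F, ((n : ℝ) / ((n : ℝ) + 1)) *
        (if ((n + 1 : ℕ) : ℕ∞) ≤ dem V p then V (n + 1) - Q (n + 1) else 0)
        ≤ (if ((n + 1 : ℕ) : ℕ∞) ≤ dem V p then V n - Q n else 0) := by
      filter_upwards [hae] with V hV
      by_cases h : ((n + 1 : ℕ) : ℕ∞) ≤ dem V p
      · rw [if_pos h, if_pos h]
        have hv := val_superhomog hV n
        have hq := cost_subhomog hQ n
        rw [div_mul_eq_mul_div, div_le_iff₀ hCpos]
        nlinarith [hv, hq]
      · rw [if_neg h, if_neg h]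
        simp
    have hmono2 : ((n : ℝ) / ((n : ℝ) + 1)) *
        ∫ V, (if ((n + 1 : ℕ) : ℕ∞) ≤ dem V p then V (n + 1) - Q (n + 1) else 0) ∂F
        ≤ ∫ V, (if ((n + 1 : ℕ) : ℕ∞) ≤ dem V p then V n - Q n else 0) ∂F := by
      rw [← integral_const_mul]
      exact integral_mono_ae (hgint.const_mul _) hh' hpt
    set X := ∫ V, (if ((n + 1 : ℕ) : ℕ∞) ≤ dem V p then V (n + 1) - Q (n + 1) else 0) ∂F
      with hX
    have hkey : ((n : ℝ) / ((n : ℝ) + 1)) * X ≤ X := by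
      have h4 : ∫ V, (if ((n + 1 : ℕ) : ℕ∞) ≤ dem V p then V n - Q n else 0) ∂F ≤ X := by
        rw [hsplit]
        linarith
      exact hmono2.trans h4
    have hmul : ((n : ℝ) + 1) * (((n : ℝ) / ((n : ℝ) + 1)) * X) = (n : ℝ) * X := by
      field_simp
    nlinarith [mul_le_mul_of_nonneg_left hkey hCpos.le, hmul]

end
end

section
/- Let Q : [0,∞) → ℝ be convex and nondecreasing with Q(0) = 0, and for y > 0 write P(y) = Q(y)/y. Then for every real C̃ > 0 and every real x with 0 ≤ x ≤ C̃, one has P(C̃)·x − Q(x) ≤ C̃·( P(C̃) − P(C̃/2) ). -/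
open MeasureTheory ProbabilityTheory

noncomputable section

/-- for a convex nondecreasing cost `Q` on `[0,∞)` with `Q 0 = 0`,
and `P(y) = Q(y)/y`, one has `P(Ct)·x − Q(x) ≤ Ct·(P(Ct) − P(Ct/2))` for `0 ≤ x ≤ Ct`. -/
theorem stmt10 (Q : ℝ → ℝ) (hconv : ConvexOn ℝ (Set.Ici (0 : ℝ)) Q)
    (hmono : MonotoneOn Q (Set.Ici (0 : ℝ))) (hQ0 : Q 0 = 0)
    (Ct : ℝ) (hCt : 0 < Ct) (x : ℝ) (hx0 : 0 ≤ x) (hxC : x ≤ Ct) :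
    Q Ct / Ct * x - Q x ≤ Ct * (Q Ct / Ct - Q (Ct / 2) / (Ct / 2)) := by
  have hCtne : Ct ≠ 0 := ne_of_gt hCt
  have h0 : (0 : ℝ) ∈ Set.Ici (0 : ℝ) := Set.mem_Ici.mpr le_rfl
  have hCtm : Ct ∈ Set.Ici (0 : ℝ) := Set.mem_Ici.mpr hCt.le
  have hxm : x ∈ Set.Ici (0 : ℝ) := Set.mem_Ici.mpr hx0
  have hRHS : Ct * (Q Ct / Ct - Q (Ct / 2) / (Ct / 2)) = Q Ct / Ct * Ct - 2 * Q (Ct / 2) := by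
    field_simp
  rw [hRHS]
  set q : ℝ := Q Ct / Ct with hq_def
  have hq : Q Ct = q * Ct := by rw [hq_def]; field_simp
  -- convexity: Q x ≤ x * q
  have hQx' : Q x ≤ x * q := by
    have ha : (0:ℝ) ≤ 1 - x / Ct := by
      have : x / Ct ≤ 1 := (div_le_one hCt).mpr hxC
      linarith
    have hb : (0:ℝ) ≤ x / Ct := by positivity
    have h := hconv.2 h0 hCtm ha hb (by ring)
    simp only [smul_eq_mul, mul_zero, zero_add, hQ0] at h
    have hx' : x / Ct * Ct = x := by field_simp
    rw [hx'] at h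
    calc Q x ≤ x / Ct * Q Ct := h
      _ = x * q := by rw [hq]; field_simp
  rcases le_or_gt x (Ct / 2) with hhalf | hhalf
  · -- Ct/2 is between x and Ct
    have ht : 0 < Ct - x := by linarith
    have htne : Ct - x ≠ 0 := ne_of_gt ht
    have ha : (0:ℝ) ≤ (Ct / 2) / (Ct - x) := by positivity
    have hb : (0:ℝ) ≤ (Ct / 2 - x) / (Ct - x) := by
      apply div_nonneg <;> linarith
    have hab : (Ct / 2) / (Ct - x) + (Ct / 2 - x) / (Ct - x) = 1 := by
      field_simp; ring
    have h := hconv.2 hxm hCtm ha hb hab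
    simp only [smul_eq_mul] at h
    have hcomb : (Ct / 2) / (Ct - x) * x + (Ct / 2 - x) / (Ct - x) * Ct = Ct / 2 := by
      field_simp; ring
    rw [hcomb] at h
    have h2 : (Ct - x) * Q (Ct / 2) ≤ (Ct / 2) * Q x + (Ct / 2 - x) * (q * Ct) := by
      calc (Ct - x) * Q (Ct / 2)
          ≤ (Ct - x) * ((Ct / 2) / (Ct - x) * Q x + (Ct / 2 - x) / (Ct - x) * Q Ct) :=
            mul_le_mul_of_nonneg_left h ht.le
        _ = (Ct / 2) * Q x + (Ct / 2 - x) * (q * Ct) := by rw [hq]; field_simp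
    have hxq : x * Q x ≤ x * (x * q) := mul_le_mul_of_nonneg_left hQx' hx0
    have hkey : (Ct - x) * (q * x - Q x) ≤ (Ct - x) * (q * Ct - 2 * Q (Ct / 2)) := by
      nlinarith [h2, hxq]
    have h3 := le_of_mul_le_mul_left hkey ht
    calc q * x - Q x ≤ q * Ct - 2 * Q (Ct / 2) := h3
      _ = q * Ct - 2 * Q (Ct / 2) := rfl
  · -- Ct/2 is between 0 and x
    have hxpos : 0 < x := lt_of_le_of_lt (by linarith) hhalf
    have hxne : x ≠ 0 := ne_of_gt hxpos
    have hb : (0:ℝ) ≤ (Ct / 2) / x := by positivity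
    have ha : (0:ℝ) ≤ 1 - (Ct / 2) / x := by
      have : (Ct / 2) / x ≤ 1 := (div_le_one hxpos).mpr hhalf.le
      linarith
    have h := hconv.2 h0 hxm ha hb (by ring)
    simp only [smul_eq_mul, mul_zero, zero_add, hQ0] at h
    have hcomb : (Ct / 2) / x * x = Ct / 2 := by field_simp
    rw [hcomb] at h
    -- h : Q (Ct/2) ≤ (1 - (Ct/2)/x) * 0 + (Ct/2)/x * Q x
    have h2 : x * Q (Ct / 2) ≤ (Ct / 2) * Q x := by
      calc x * Q (Ct / 2) ≤ x * ((Ct / 2) / x * Q x) :=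
            mul_le_mul_of_nonneg_left h hxpos.le
        _ = (Ct / 2) * Q x := by field_simp
    have hQxCt : Ct * Q x ≤ x * (q * Ct) := by
      calc Ct * Q x ≤ Ct * (x * q) := mul_le_mul_of_nonneg_left hQx' hCt.le
        _ = x * (q * Ct) := by ring
    have hfac : 0 ≤ (Ct - x) * (x * q - Q x) := by
      apply mul_nonneg (by linarith) (by linarith)
    have hkey : x * (q * x - Q x) ≤ x * (q * Ct - 2 * Q (Ct / 2)) := by
      nlinarith [h2, hQxCt, hfac]
    exact le_of_mul_le_mul_left hkey hxpos


end
end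

section
/- In the two-firm game described below with true valuations V_1 having marginals (10, 10, 0, 0, …) and V_2 having marginals (6, 1, 0, 0, …), and social cost Q(x) = 9x: (i) under truthful bidding the auction allocates both licenses to firm 1 at a per-license price of 6, and the resulting welfare is V_1(2) − Q(2) = 2; (ii) the bid profile in which firm 1 bids the valuation curve with marginals (10, 1, 0, 0, …) and firm 2 bids truthfully is a pure Nash equilibrium — under every tie-breaking rule consistent with the auction, no firm can strictly increase its utility by deviating to any other valuation-curve bid — and the welfare at this profile is V_1(1) + V_2(1) − Q(2) = −2 < 0. -/
open MeasureTheory ProbabilityTheory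

noncomputable section

/-- The combined bid curve of two bid curves. -/
def comb2 (B1 B2 : ℕ → ℝ) (x : ℕ) : ℝ :=
  sSup {s : ℝ | ∃ y1 y2 : ℕ, y1 + y2 = x ∧ s = B1 y1 + B2 y2}

/-- An outcome of the 2-license uniform-price auction on bids `B1, B2`:
an allocation `(x1,x2)` of the two licenses maximizing `B1 x1 + B2 x2` (any
tie-breaking consistent with this), with per-license price the highest losing
marginal bid `B(3) − B(2)` of the combined bid curve. -/
def Outcome2 (B1 B2 : ℕ → ℝ) (x1 x2 : ℕ) (pr : ℝ) : Prop :=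
  x1 + x2 = 2 ∧ (∀ y1 y2 : ℕ, y1 + y2 = 2 → B1 y1 + B2 y2 ≤ B1 x1 + B2 x2) ∧
    pr = comb2 B1 B2 3 - comb2 B1 B2 2

/-- Firm 1's true valuation: marginals (10, 10, 0, 0, …). -/
def Vone : ℕ → ℝ := fun x => min (10 * (x : ℝ)) 20
/-- Firm 2's true valuation: marginals (6, 1, 0, 0, …). -/
def Vtwo : ℕ → ℝ := fun x => min (6 * (x : ℝ)) 7
/-- Firm 1's demand-reduced bid: marginals (10, 1, 0, 0, …). -/
def Bdev : ℕ → ℝ := fun x => min (10 * (x : ℝ)) 11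

lemma comb2_bdd (B1 B2 : ℕ → ℝ) (x : ℕ) :
    BddAbove {s : ℝ | ∃ y1 y2 : ℕ, y1 + y2 = x ∧ s = B1 y1 + B2 y2} := by
  have hsub : {s : ℝ | ∃ y1 y2 : ℕ, y1 + y2 = x ∧ s = B1 y1 + B2 y2} ⊆
      (fun y1 => B1 y1 + B2 (x - y1)) '' Set.Iic x := by
    rintro s ⟨y1, y2, h, rfl⟩
    have hy : x - y1 = y2 := by omega
    exact ⟨y1, Set.mem_Iic.mpr (by omega), by simp [hy]⟩
  exact (((Set.finite_Iic x).image _).subset hsub).bddAbove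

lemma le_comb2 {B1 B2 : ℕ → ℝ} {x y1 y2 : ℕ} (h : y1 + y2 = x) :
    B1 y1 + B2 y2 ≤ comb2 B1 B2 x :=
  le_csSup (comb2_bdd _ _ _) ⟨y1, y2, h, rfl⟩

lemma comb2_le {B1 B2 : ℕ → ℝ} {x : ℕ} {M : ℝ}
    (h : ∀ y1 y2 : ℕ, y1 + y2 = x → B1 y1 + B2 y2 ≤ M) : comb2 B1 B2 x ≤ M :=
  csSup_le ⟨B1 0 + B2 x, 0, x, by omega, rfl⟩ (by rintro s ⟨y1, y2, hy, rfl⟩; exact h _ _ hy)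

/-- with social cost `Q(x) = 9x`: (i) under truthful bidding both
licenses go to firm 1 at price 6 and welfare is 2; (ii) the profile where firm 1 bids
`Bdev` and firm 2 bids truthfully is a pure Nash equilibrium (under every consistent
tie-breaking, no deviation beats the equilibrium utilities 9 and 5), and its welfare
is `V1(1) + V2(1) − Q(2) = −2`. -/
theorem stmt15 :
    (∀ (x1 x2 : ℕ) (pr : ℝ), Outcome2 Vone Vtwo x1 x2 pr →
      x1 = 2 ∧ x2 = 0 ∧ pr = 6 ∧ Vone x1 + Vtwo x2 - 9 * ((x1 : ℝ) + (x2 : ℝ)) = 2) ∧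
    (∀ (x1 x2 : ℕ) (pr : ℝ), Outcome2 Bdev Vtwo x1 x2 pr →
      x1 = 1 ∧ x2 = 1 ∧ pr = 1 ∧ Vone x1 + Vtwo x2 - 9 * ((x1 : ℝ) + (x2 : ℝ)) = -2) ∧
    (∀ B : ℕ → ℝ, IsValuation B → ∀ (x1 x2 : ℕ) (pr : ℝ), Outcome2 B Vtwo x1 x2 pr →
      Vone x1 - pr * (x1 : ℝ) ≤ 9) ∧
    (∀ B : ℕ → ℝ, IsValuation B → ∀ (x1 x2 : ℕ) (pr : ℝ), Outcome2 Bdev B x1 x2 pr →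
      Vtwo x2 - pr * (x2 : ℝ) ≤ 5) := by
  have hVV2 : comb2 Vone Vtwo 2 = 20 := by
    apply le_antisymm
    · apply comb2_le
      intro y1 y2 h
      have hb1 : y1 ≤ 3 := by omega
      have hb2 : y2 ≤ 3 := by omega
      interval_cases y1 <;> interval_cases y2 <;> first | omega | norm_num [Vone, Vtwo]
    · have := le_comb2 (B1 := Vone) (B2 := Vtwo) (y1 := 2) (y2 := 0) rfl
      norm_num [Vone, Vtwo] at this
      linarith
  have hVV3 : comb2 Vone Vtwo 3 = 26 := by
    apply le_antisymm
    · apply comb2_le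
      intro y1 y2 h
      have hb1 : y1 ≤ 3 := by omega
      have hb2 : y2 ≤ 3 := by omega
      interval_cases y1 <;> interval_cases y2 <;> first | omega | norm_num [Vone, Vtwo]
    · have := le_comb2 (B1 := Vone) (B2 := Vtwo) (y1 := 2) (y2 := 1) rfl
      norm_num [Vone, Vtwo] at this
      linarith
  have hBV2 : comb2 Bdev Vtwo 2 = 16 := by
    apply le_antisymm
    · apply comb2_le
      intro y1 y2 h
      have hb1 : y1 ≤ 3 := by omega
      have hb2 : y2 ≤ 3 := by omega
      interval_cases y1 <;> interval_cases y2 <;> first | omega | norm_num [Bdev, Vtwo]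
    · have := le_comb2 (B1 := Bdev) (B2 := Vtwo) (y1 := 1) (y2 := 1) rfl
      norm_num [Bdev, Vtwo] at this
      linarith
  have hBV3 : comb2 Bdev Vtwo 3 = 17 := by
    apply le_antisymm
    · apply comb2_le
      intro y1 y2 h
      have hb1 : y1 ≤ 3 := by omega
      have hb2 : y2 ≤ 3 := by omega
      interval_cases y1 <;> interval_cases y2 <;> first | omega | norm_num [Bdev, Vtwo]
    · have := le_comb2 (B1 := Bdev) (B2 := Vtwo) (y1 := 2) (y2 := 1) rfl
      norm_num [Bdev, Vtwo] at this
      linarith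
  refine ⟨?_, ?_, ?_, ?_⟩
  · -- (i) truthful bidding
    rintro x1 x2 pr ⟨hx, hmax, hpr⟩
    have key := hmax 2 0 rfl
    have hx1 : x1 ≤ 2 := by omega
    have hx2 : x2 ≤ 2 := by omega
    subst hpr
    interval_cases x1 <;> interval_cases x2 <;>
      first
      | omega
      | (norm_num [Vone, Vtwo, hVV3, hVV2]; done)
      | (norm_num [Vone, Vtwo] at key; done)
  · -- (ii) the deviation profile
    rintro x1 x2 pr ⟨hx, hmax, hpr⟩
    have key := hmax 1 1 rfl
    have hx1 : x1 ≤ 2 := by omega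
    have hx2 : x2 ≤ 2 := by omega
    subst hpr
    interval_cases x1 <;> interval_cases x2 <;>
      first
      | omega
      | (norm_num [Vone, Vtwo, hBV3, hBV2]; done)
      | (norm_num [Bdev, Vtwo] at key; done)
  · -- (iii) firm 1 cannot profit by deviating
    rintro B hB x1 x2 pr ⟨hx, hmax, hpr⟩
    have hx1 : x1 ≤ 2 := by omega
    interval_cases x1
    · norm_num [Vone]
    · have hx2 : x2 = 1 := by omega
      subst hx2
      have hc2 : comb2 B Vtwo 2 ≤ B 1 + Vtwo 1 := comb2_le hmax
      have hc3 : B 1 + Vtwo 2 ≤ comb2 B Vtwo 3 := le_comb2 rfl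
      have hv1 : Vtwo 1 = 6 := by norm_num [Vtwo]
      have hv2 : Vtwo 2 = 7 := by norm_num [Vtwo]
      have hpr1 : (1 : ℝ) ≤ pr := by rw [hpr]; linarith
      have : Vone 1 = 10 := by norm_num [Vone]
      rw [this]
      push_cast
      linarith
    · have hx2 : x2 = 0 := by omega
      subst hx2
      have hc2 : comb2 B Vtwo 2 ≤ B 2 + Vtwo 0 := comb2_le hmax
      have hc3 : B 2 + Vtwo 1 ≤ comb2 B Vtwo 3 := le_comb2 rfl
      have hv0 : Vtwo 0 = 0 := by norm_num [Vtwo]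
      have hv1 : Vtwo 1 = 6 := by norm_num [Vtwo]
      have hpr6 : (6 : ℝ) ≤ pr := by rw [hpr]; linarith
      have : Vone 2 = 20 := by norm_num [Vone]
      rw [this]
      push_cast
      linarith
  · -- (iv) firm 2 cannot profit by deviating
    rintro B hB x1 x2 pr ⟨hx, hmax, hpr⟩
    have hx2' : x2 ≤ 2 := by omega
    interval_cases x2
    · norm_num [Vtwo]
    · have hx1 : x1 = 1 := by omega
      subst hx1
      have hc2 : comb2 Bdev B 2 ≤ Bdev 1 + B 1 := comb2_le hmax
      have hc3 : Bdev 2 + B 1 ≤ comb2 Bdev B 3 := le_comb2 rfl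
      have hb1 : Bdev 1 = 10 := by norm_num [Bdev]
      have hb2 : Bdev 2 = 11 := by norm_num [Bdev]
      have hpr1 : (1 : ℝ) ≤ pr := by rw [hpr]; linarith
      have : Vtwo 1 = 6 := by norm_num [Vtwo]
      rw [this]
      push_cast
      linarith
    · have hx1 : x1 = 0 := by omega
      subst hx1
      have hc2 : comb2 Bdev B 2 ≤ Bdev 0 + B 2 := comb2_le hmax
      have hc3 : Bdev 1 + B 2 ≤ comb2 Bdev B 3 := le_comb2 rfl
      have hb0 : Bdev 0 = 0 := by norm_num [Bdev]
      have hb1 : Bdev 1 = 10 := by norm_num [Bdev]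
      have hpr10 : (10 : ℝ) ≤ pr := by rw [hpr]; linarith
      have : Vtwo 2 = 7 := by norm_num [Vtwo]
      rw [this]
      push_cast
      linarith

end
end
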